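/- arXiv:1408.1859 — 10 statements merged into one kernel-verified Lean document; each statement's English description precedes it below -/
import Mathlib

section
/- Let D be the unique ℚ-linear derivation of the polynomial ring ℚ[x,y] satisfying D(x) = xy and D(y) = xy. Then for every n ≥ 1, D^n(x) = Σ_{m=1}^{n} A(n,m) x^m y^{n+1-m}, where A(n,m) denotes the number of permutations of [n] with exactly m-1 ascents. -/
open MvPolynomial

/-- The number of ascents of a permutation of `[n]`, viewing the permutation as the
word `π 0, π 1, …, π (n-1)`: indices `i` with `1 ≤ i ≤ n-1` and `π i < π (i+1)`
(0-indexed), counted via consecutive pairs. -/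
def ascents {n : ℕ} (π : Equiv.Perm (Fin n)) : ℕ :=
  ((List.ofFn fun i => (π i : ℕ)).zip (List.ofFn fun i => (π i : ℕ)).tail).countP
    fun p => decide (p.1 < p.2)

/-- `eulerianA n m` is the number of permutations of `[n]` with exactly `m - 1` ascents. -/
noncomputable def eulerianA (n m : ℕ) : ℕ :=
  Nat.card {π : Equiv.Perm (Fin n) // ascents π = m - 1}

/-!
Inserting the maximal value `n` into the `n + 1` gaps of a permutation of `[n]` with `a` ascents
produces every permutation of `[n + 1]` exactly once; the insertion keeps the number of ascents
when it goes in front or into one of the `a` ascent gaps, and raises it by one in the other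
`n - a` gaps. Correspondingly, `D (x ^ (a + 1) * y ^ (n - a))` is
`(a + 1) x ^ (a + 1) y ^ (n + 1 - a) + (n - a) x ^ (a + 2) y ^ (n - a)`, so
`D^[n] x = ∑ σ : Perm (Fin n), x ^ (ascents σ + 1) * y ^ (n - ascents σ)` follows by induction
on `n`, and grouping the permutations by their number of ascents gives the Eulerian numbers.
-/

open Finset Equiv

theorem List.ofFn_insertNth {α : Type*} {n : ℕ} (j : Fin (n + 1)) (x : α) (p : Fin n → α) :
    ofFn (Fin.insertNth j x p) = (ofFn p).insertIdx j x := by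
  induction n with
  | zero =>
    obtain rfl : j = 0 := Subsingleton.elim (α := Fin 1) _ _
    simp [Fin.insertNth_zero']
  | succ n ih =>
    cases j using Fin.cases with
    | zero => simp [Fin.insertNth_zero']
    | succ j =>
      rw [← Fin.cons_self_tail p, Fin.insertNth_succ_cons, ofFn_cons, ofFn_cons, ih]
      rfl

namespace List

variable {α : Type*} [LinearOrder α]

def ascentCount (l : List α) : ℕ :=
  (l.zip l.tail).countP fun p => p.1 < p.2

def IsAscentAt (l : List α) (i : ℕ) : Prop :=
  ∃ h : i + 1 < l.length, l[i] < l[i + 1]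

instance (l : List α) (i : ℕ) : Decidable (l.IsAscentAt i) := by
  unfold IsAscentAt; infer_instance

@[simp] theorem ascentCount_nil : ([] : List α).ascentCount = 0 := rfl

@[simp] theorem ascentCount_singleton (x : α) : [x].ascentCount = 0 := rfl

@[simp] theorem isAscentAt_cons_succ (x : α) (l : List α) (i : ℕ) :
    (x :: l).IsAscentAt (i + 1) ↔ l.IsAscentAt i := by
  simp [IsAscentAt]

@[simp] theorem isAscentAt_cons_cons_zero (x y : α) (l : List α) :
    (x :: y :: l).IsAscentAt 0 ↔ x < y := by
  simp [IsAscentAt]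

theorem ascentCount_cons (x : α) (l : List α) :
    (x :: l).ascentCount = (if (x :: l).IsAscentAt 0 then 1 else 0) + l.ascentCount := by
  cases l with
  | nil => simp [IsAscentAt]
  | cons y t =>
    by_cases h : x < y <;> simp [ascentCount, h, add_comm]

theorem ascentCount_le_length_sub_one (l : List α) : l.ascentCount ≤ l.length - 1 := by
  induction l with
  | nil => simp
  | cons x t ih =>
    rw [ascentCount_cons]
    cases t with
    | nil => simp [IsAscentAt]
    | cons y t => simp only [length_cons] at ih ⊢; split <;> omega

theorem ascentCount_eq_card_isAscentAt (l : List α) :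
    l.ascentCount = #{i ∈ Finset.range l.length | l.IsAscentAt i} := by
  induction l with
  | nil => simp
  | cons x t ih =>
    rw [ascentCount_cons, card_filter, length_cons, Finset.sum_range_succ', ih, card_filter]
    simp only [isAscentAt_cons_succ]
    omega

theorem ascentCount_cons_of_forall_lt {M : α} {l : List α} (hM : ∀ v ∈ l, v < M) :
    (M :: l).ascentCount = l.ascentCount := by
  cases l with
  | nil => rfl
  | cons y t =>
    simp [ascentCount_cons, (hM y (by simp)).not_gt]

/-- Since `M` exceeds every entry, the gap `l[j-1], l[j]` is replaced by the ascent `l[j-1] < M`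
and the non-ascent `M > l[j]`. -/
theorem ascentCount_insertIdx {M : α} {l : List α} (hM : ∀ v ∈ l, v < M) {j : ℕ}
    (hj : j ≤ l.length) :
    (l.insertIdx j M).ascentCount =
      l.ascentCount + if j = 0 ∨ l.IsAscentAt (j - 1) then 0 else 1 := by
  induction l generalizing j with
  | nil => simp_all
  | cons x t ih =>
    cases j with
    | zero => simp [ascentCount_cons_of_forall_lt hM]
    | succ i =>
      have hx : x < M := hM x (by simp)
      rw [insertIdx_succ_cons, ascentCount_cons, ascentCount_cons]
      cases i with
      | zero =>
        rw [insertIdx_zero, ascentCount_cons_of_forall_lt fun v hv => hM v (by simp [hv])]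
        cases t with
        | nil => simp [IsAscentAt, hx]
        | cons y t => simp [hx]; split <;> omega
      | succ i =>
        obtain ⟨y, t, rfl⟩ := exists_cons_of_length_pos (show 0 < t.length by simp at hj; omega)
        rw [ih (fun v hv => hM v (by simp [hv])) (by simp at hj ⊢; omega)]
        simp [add_assoc]

theorem sum_range_ascentCount_insertIdx {A : Type*} [AddCommMonoid A] (F : ℕ → A) {M : α}
    {l : List α} (hM : ∀ v ∈ l, v < M) :
    ∑ j ∈ Finset.range (l.length + 1), F (l.insertIdx j M).ascentCount =
      (l.ascentCount + 1) • F l.ascentCount +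
        (l.length - l.ascentCount) • F (l.ascentCount + 1) := by
  set P : ℕ → Prop := fun j => j = 0 ∨ l.IsAscentAt (j - 1)
  have hcard : #{j ∈ Finset.range (l.length + 1) | P j} = l.ascentCount + 1 := by
    rw [card_filter, Finset.sum_range_succ', ascentCount_eq_card_isAscentAt, card_filter]
    simp [P]
  have hcard_not : #{j ∈ Finset.range (l.length + 1) | ¬ P j} = l.length - l.ascentCount := by
    have := card_filter_add_card_filter_not (s := Finset.range (l.length + 1)) P
    rw [Finset.card_range, hcard] at this
    omega
  have hterm : ∀ j ∈ Finset.range (l.length + 1), F (l.insertIdx j M).ascentCount =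
      if P j then F l.ascentCount else F (l.ascentCount + 1) := fun j hj => by
    rw [ascentCount_insertIdx hM (Nat.lt_succ_iff.mp (Finset.mem_range.mp hj))]
    split <;> rfl
  rw [Finset.sum_congr rfl hterm, sum_ite, sum_const, sum_const, hcard, hcard_not]

end List

theorem ascents_eq_ascentCount {n : ℕ} (σ : Perm (Fin n)) :
    ascents σ = (List.ofFn fun i => (σ i : ℕ)).ascentCount := rfl

theorem ascents_le {n : ℕ} (σ : Perm (Fin n)) : ascents σ ≤ n - 1 :=
  (List.ofFn fun i => (σ i : ℕ)).ascentCount_le_length_sub_one.trans_eq (by simp)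

/-- The permutation of `Fin (n + 1)` whose word is that of `τ` with the value `n` inserted at
position `j`. -/
def Equiv.Perm.insertMax {n : ℕ} (j : Fin (n + 1)) (τ : Perm (Fin n)) : Perm (Fin (n + 1)) :=
  (finSuccEquiv' j).trans (τ.optionCongr.trans finSuccEquivLast.symm)

namespace Equiv.Perm
variable {n : ℕ}

@[simp] theorem insertMax_apply_self (j : Fin (n + 1)) (τ : Perm (Fin n)) :
    insertMax j τ j = Fin.last n := by
  simp [insertMax, finSuccEquiv'_at]

@[simp] theorem insertMax_apply_succAbove (j : Fin (n + 1)) (τ : Perm (Fin n)) (i : Fin n) :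
    insertMax j τ (j.succAbove i) = (τ i).castSucc := by
  simp [insertMax, finSuccEquiv'_succAbove]

theorem insertMax_injective :
    Function.Injective fun p : Fin (n + 1) × Perm (Fin n) => insertMax p.1 p.2 := by
  rintro ⟨j, τ⟩ ⟨j', τ'⟩ h
  simp only at h
  obtain rfl : j = j' := by
    by_contra hne
    obtain ⟨i, hi⟩ := Fin.exists_succAbove_eq hne
    have := insertMax_apply_self j τ
    rw [h, ← hi, insertMax_apply_succAbove] at this
    exact (Fin.castSucc_lt_last _).ne this
  congr
  exact Equiv.ext fun i => by simpa using congr($h (j.succAbove i))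

theorem insertMax_bijective :
    Function.Bijective fun p : Fin (n + 1) × Perm (Fin n) => insertMax p.1 p.2 := by
  rw [Fintype.bijective_iff_injective_and_card]
  exact ⟨insertMax_injective, by simp [Fintype.card_perm, Nat.factorial_succ]⟩

theorem ofFn_insertMax (j : Fin (n + 1)) (τ : Perm (Fin n)) :
    List.ofFn (fun i => (insertMax j τ i : ℕ)) =
      (List.ofFn fun i => (τ i : ℕ)).insertIdx j n := by
  rw [← List.ofFn_insertNth]
  congr 1
  rw [Fin.eq_insertNth_iff]
  exact ⟨by simp, funext fun i => by simp [Fin.removeNth]⟩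

theorem sum_ascents_insertMax {M : Type*} [AddCommMonoid M] (F : ℕ → M) (τ : Perm (Fin n)) :
    ∑ j : Fin (n + 1), F (ascents (insertMax j τ)) =
      (ascents τ + 1) • F (ascents τ) + (n - ascents τ) • F (ascents τ + 1) := by
  have hlt : ∀ v ∈ List.ofFn fun i => (τ i : ℕ), v < n := by simp
  have hlen : (List.ofFn fun i => (τ i : ℕ)).length = n := List.length_ofFn
  simp only [ascents_eq_ascentCount, ofFn_insertMax]
  generalize List.ofFn (fun i => (τ i : ℕ)) = l at hlt hlen ⊢
  rw [Fin.sum_univ_eq_sum_range (fun j => F (l.insertIdx j n).ascentCount),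
    show n + 1 = l.length + 1 by rw [hlen], List.sum_range_ascentCount_insertIdx F hlt, hlen]

end Equiv.Perm

theorem Derivation.apply_pow_mul_pow {R A : Type*} [CommSemiring R] [CommSemiring A] [Algebra R A]
    (D : Derivation R A A) {x y : A} (hx : D x = x * y) (hy : D y = x * y) (a b : ℕ) :
    D (x ^ a * y ^ b) = a • (x ^ a * y ^ (b + 1)) + b • (x ^ (a + 1) * y ^ b) := by
  rw [Derivation.leibniz, Derivation.leibniz_pow, Derivation.leibniz_pow, hx, hy]
  rcases a with _ | a <;> rcases b with _ | b <;> simp [smul_eq_mul, pow_succ] <;> ring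

theorem Derivation.iterate_apply_eq_sum_perm {R A : Type*} [CommSemiring R] [CommSemiring A]
    [Algebra R A] (D : Derivation R A A) {x y : A} (hx : D x = x * y) (hy : D y = x * y) (n : ℕ) :
    (⇑D)^[n] x = ∑ σ : Perm (Fin n), x ^ (ascents σ + 1) * y ^ (n - ascents σ) := by
  induction n with
  | zero => simp [ascents]
  | succ n ih =>
    have hstep (τ : Perm (Fin n)) :
        D (x ^ (ascents τ + 1) * y ^ (n - ascents τ)) =
          ∑ j : Fin (n + 1), x ^ (ascents (Perm.insertMax j τ) + 1) *
            y ^ (n + 1 - ascents (Perm.insertMax j τ)) := by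
      rw [Perm.sum_ascents_insertMax (fun c => x ^ (c + 1) * y ^ (n + 1 - c)),
        D.apply_pow_mul_pow hx hy, Nat.add_sub_add_right, ← Nat.sub_add_comm]
      exact (ascents_le τ).trans (Nat.sub_le n 1)
    rw [Function.iterate_succ_apply', ih, map_sum, Finset.sum_congr rfl fun τ _ => hstep τ,
      ← Fintype.sum_prod_type_right', ← Fintype.sum_bijective _ Perm.insertMax_bijective]
    exact fun _ => rfl

theorem sum_perm_ascents_eq_sum_eulerianA {M : Type*} [AddCommMonoid M] (f : ℕ → M) {n : ℕ}
    (hn : 1 ≤ n) :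
    ∑ σ : Perm (Fin n), f (ascents σ + 1) = ∑ m ∈ Icc 1 n, eulerianA n m • f m := by
  rw [← sum_fiberwise_of_maps_to (g := fun σ => ascents σ + 1) (t := Icc 1 n)
    fun σ _ => mem_Icc.2 ⟨by omega, by have := ascents_le σ; omega⟩]
  refine sum_congr rfl fun m hm => ?_
  rw [sum_congr rfl fun σ hσ => by rw [(mem_filter.1 hσ).2], sum_const, eulerianA,
    Nat.card_eq_fintype_card, Fintype.card_subtype]
  have hm1 := (mem_Icc.1 hm).1
  rw [filter_congr fun σ _ => show ascents σ + 1 = m ↔ ascents σ = m - 1 by omega]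

theorem stmt0
    (D : Derivation ℚ (MvPolynomial (Fin 2) ℚ) (MvPolynomial (Fin 2) ℚ))
    (hx : D (X 0) = X 0 * X 1) (hy : D (X 1) = X 0 * X 1)
    (n : ℕ) (hn : 1 ≤ n) :
    (⇑D)^[n] (X 0) =
      ∑ m ∈ Finset.Icc 1 n,
        (eulerianA n m : MvPolynomial (Fin 2) ℚ) * X 0 ^ m * X 1 ^ (n + 1 - m) := by
  calc (⇑D)^[n] (X 0)
      = ∑ σ : Perm (Fin n), (fun m => X 0 ^ m * X 1 ^ (n + 1 - m)) (ascents σ + 1) := by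
        simp [D.iterate_apply_eq_sum_perm hx hy]
    _ = _ := by
        rw [sum_perm_ascents_eq_sum_eulerianA (fun m => X 0 ^ m * X 1 ^ (n + 1 - m)) hn]
        simp [nsmul_eq_mul, mul_assoc]
end

section
/- For every n ≥ 1 and every a ≥ 1, the number of cyclic permutations σ of [n+1] (permutations of [n+1] whose cycle decomposition consists of a single (n+1)-cycle) with exactly a cyclic ascents equals the number of permutations of [n] with exactly a-1 ascents; here an index i ∈ [n+1] is a cyclic ascent of σ if σ(i) > i. Equivalently, Σ_{σ ∈ C_{n+1}} x^{asc_c(σ)} y^{des_c(σ)} = Σ_{π ∈ S_n} x^{asc(π)+1} y^{des(π)+1} as polynomials, where des_c(σ) = #{i : σ(i) < i}. -/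
open Finset

namespace List

variable {α : Type*}

theorem zip_tail_append_singleton (u : List α) (hu : u ≠ []) (y : α) :
    zip u (u.tail ++ [y]) = zip u u.tail ++ [(u.getLast hu, y)] := by
  induction u with
  | nil => exact absurd rfl hu
  | cons x v ih =>
    rcases v with _ | ⟨x', r⟩
    · rfl
    · simpa using ih (cons_ne_nil x' r)

theorem zip_cons_rotate_one (a : α) {w : List α} (hw : w ≠ []) :
    zip (a :: w) ((a :: w).rotate 1) =
      (a, w.head hw) :: (zip w w.tail ++ [(w.getLast hw, a)]) := by
  obtain ⟨x, v, rfl⟩ := exists_cons_of_ne_nil hw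
  rw [rotate_cons_succ, rotate_zero, cons_append, zip_cons_cons, ← zip_tail_append_singleton]
  rfl

theorem countP_zip_tail_map_strictMono {β : Type*} [LinearOrder α] [LinearOrder β]
    {f : α → β} (hf : StrictMono f) (u : List α) :
    (zip (u.map f) (u.map f).tail).countP (fun p => p.1 < p.2) =
      (zip u u.tail).countP (fun p => p.1 < p.2) := by
  rw [← map_tail, zip_map, countP_map]
  congr 1
  funext p
  simp [hf.lt_iff_lt]

variable [DecidableEq α]

theorem map_formPerm_eq_zip_rotate {l : List α} (hl : l.Nodup) :
    l.map (fun x => (x, l.formPerm x)) = zip l (l.rotate 1) := by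
  refine ext_getElem (by simp) fun i _ _ => ?_
  simp [formPerm_apply_getElem _ hl, getElem_rotate]

theorem card_filter_formPerm {l : List α} (hl : l.Nodup) (r : α → α → Prop) [DecidableRel r] :
    #{x ∈ l.toFinset | r x (l.formPerm x)} =
      (zip l (l.rotate 1)).countP (fun p => r p.1 p.2) := by
  rw [← map_formPerm_eq_zip_rotate hl, countP_map, countP_eq_length_filter,
    ← toFinset_card_of_nodup (hl.filter _), toFinset_filter]
  simp

end List

open Equiv Equiv.Perm List

theorem ascents_eq_countP {n : ℕ} (π : Perm (Fin n)) :
    ascents π = (zip (ofFn π) (ofFn π).tail).countP (fun p => p.1 < p.2) := by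
  rw [ascents, ← countP_zip_tail_map_strictMono Fin.val_strictMono, map_ofFn]
  rfl

namespace CyclicAscents

variable {m : ℕ}

/-- In cycle notation `fullCycle π = (last, π 0, …, π m)`, with `Fin.last (m + 1)` playing
the role of `n + 1`. -/
def cycleWord (π : Perm (Fin (m + 1))) : List (Fin (m + 2)) :=
  Fin.last (m + 1) :: (ofFn π).map Fin.castSucc

def fullCycle (π : Perm (Fin (m + 1))) : Perm (Fin (m + 2)) :=
  (cycleWord π).formPerm

theorem length_cycleWord (π : Perm (Fin (m + 1))) : (cycleWord π).length = m + 2 := by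
  simp [cycleWord]

theorem nodup_cycleWord (π : Perm (Fin (m + 1))) : (cycleWord π).Nodup := by
  refine nodup_cons.2 ⟨?_, (nodup_ofFn.2 π.injective).map (Fin.castSucc_injective _)⟩
  rw [List.mem_map]
  rintro ⟨x, -, hx⟩
  exact (Fin.castSucc_lt_last x).ne hx

theorem toFinset_cycleWord (π : Perm (Fin (m + 1))) : (cycleWord π).toFinset = univ := by
  apply eq_univ_of_card
  rw [toFinset_card_of_nodup (nodup_cycleWord π), length_cycleWord, Fintype.card_fin]

theorem cycleWord_injective : Function.Injective (cycleWord (m := m)) := fun _ _ h =>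
  Equiv.coe_fn_injective <| ofFn_injective <|
    (map_injective_iff.2 (Fin.castSucc_injective _)) (cons_injective h)

theorem isCycle_fullCycle (π : Perm (Fin (m + 1))) : (fullCycle π).IsCycle :=
  isCycle_formPerm (nodup_cycleWord π) (by rw [length_cycleWord]; omega)

theorem support_fullCycle (π : Perm (Fin (m + 1))) : (fullCycle π).support = univ := by
  rw [fullCycle, support_formPerm_of_nodup _ (nodup_cycleWord π), toFinset_cycleWord]
  intro x hx
  simpa [hx] using length_cycleWord π

theorem toList_fullCycle (π : Perm (Fin (m + 1))) :
    (fullCycle π).toList (Fin.last (m + 1)) = cycleWord π :=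
  toList_formPerm_nontrivial _ (by rw [length_cycleWord]; omega) (nodup_cycleWord π)

theorem fullCycle_injective : Function.Injective (fullCycle (m := m)) := fun _ _ h =>
  cycleWord_injective <| by rw [← toList_fullCycle, h, toList_fullCycle]

theorem card_lt_fullCycle_apply (π : Perm (Fin (m + 1))) :
    Nat.card {i // i < fullCycle π i} = ascents π + 1 := by
  have hw : (ofFn π).map Fin.castSucc ≠ [] := by simp
  have hlt : ∀ x ∈ (ofFn π).map Fin.castSucc, x < Fin.last (m + 1) := by
    simp [Fin.castSucc_lt_last]
  rw [Nat.card_eq_fintype_card, Fintype.card_subtype, ← toFinset_cycleWord π, fullCycle,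
    card_filter_formPerm (nodup_cycleWord π), cycleWord, zip_cons_rotate_one _ hw, countP_cons,
    countP_append, ascents_eq_countP, countP_zip_tail_map_strictMono Fin.strictMono_castSucc]
  simp only [countP_cons, countP_nil, decide_eq_true_eq, if_pos (hlt _ (getLast_mem hw)),
    if_neg (hlt _ (head_mem hw)).not_gt]

theorem exists_fullCycle_eq {σ : Perm (Fin (m + 2))} (hσ : σ.IsCycle) (hs : σ.support = univ) :
    ∃ π, fullCycle π = σ := by
  have hmem : Fin.last (m + 1) ∈ σ.support := hs ▸ mem_univ _
  have hlen : (σ.toList (Fin.last (m + 1))).length = m + 2 := by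
    rw [Perm.length_toList, hσ.cycleOf_eq (mem_support.1 hmem), hs, card_univ, Fintype.card_fin]
  obtain ⟨y, t, ht⟩ := exists_cons_of_length_eq_add_one hlen
  obtain rfl : y = Fin.last (m + 1) := by
    simpa [ht] using Perm.toList_getElem_zero σ _ hmem
  have hnd := nodup_toList σ (Fin.last (m + 1))
  rw [ht] at hnd
  obtain ⟨hlast, htnd⟩ := nodup_cons.1 hnd
  have htlen : t.length = m + 1 := by simpa [ht] using hlen
  let π₀ (j : Fin (m + 1)) : Fin (m + 1) :=
    (t[j]'(by omega)).castPred fun h => hlast (h ▸ getElem_mem _)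
  have hπ₀ : Function.Injective π₀ := fun i j h =>
    Fin.ext (htnd.getElem_inj_iff.1 (Fin.castPred_inj.1 h))
  refine ⟨Equiv.ofBijective π₀ (Finite.injective_iff_bijective.1 hπ₀), ?_⟩
  have hword : cycleWord (Equiv.ofBijective π₀ (Finite.injective_iff_bijective.1 hπ₀)) =
      σ.toList (Fin.last (m + 1)) := by
    rw [ht, cycleWord, map_ofFn]
    congr 1
    refine ext_getElem (by simp [htlen]) fun i _ _ => ?_
    simp only [List.getElem_ofFn, Function.comp_apply, Equiv.ofBijective_apply, π₀,
      Fin.castSucc_castPred]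
    rfl
  rw [fullCycle, hword, formPerm_toList, hσ.cycleOf_eq (mem_support.1 hmem)]

end CyclicAscents

open CyclicAscents in
/-- The number of cyclic permutations of `[n+1]` (single `(n+1)`-cycles) with exactly `a`
cyclic ascents (indices `i` with `σ i > i`) equals the number of permutations of `[n]`
with exactly `a - 1` ascents. -/
theorem stmt1 (n a : ℕ) (hn : 1 ≤ n) (ha : 1 ≤ a) :
    Nat.card {σ : Equiv.Perm (Fin (n + 1)) //
        σ.IsCycle ∧ σ.support = Finset.univ ∧
        Nat.card {i : Fin (n + 1) // i < σ i} = a} =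
    Nat.card {π : Equiv.Perm (Fin n) // ascents π = a - 1} := by
  obtain ⟨m, rfl⟩ : ∃ m, n = m + 1 := ⟨n - 1, by omega⟩
  obtain ⟨b, rfl⟩ : ∃ b, a = b + 1 := ⟨a - 1, by omega⟩
  have hasc (π : Perm (Fin (m + 1))) :
      Nat.card {i // i < fullCycle π i} = b + 1 ↔ ascents π = b := by
    rw [card_lt_fullCycle_apply]
    omega
  refine (Nat.card_congr (Equiv.ofBijective (fun π => ⟨fullCycle π.1, isCycle_fullCycle _,
    support_fullCycle _, (hasc π.1).2 π.2⟩) ⟨?_, ?_⟩)).symm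
  · exact fun _ _ h => Subtype.ext (fullCycle_injective (congrArg Subtype.val h))
  · rintro ⟨σ, hσ, hs, hσasc⟩
    obtain ⟨π, rfl⟩ := exists_fullCycle_eq hσ hs
    exact ⟨⟨π, (hasc π).1 hσasc⟩, rfl⟩
end

section
/- Let K be the field of fractions of the polynomial ring ℚ[x,y], and let d be a ℚ-linear derivation of K satisfying d(x) = xy and d(y) = xy. Then for every n ≥ 0, d^n(x^{-1}y) = x^{-1} y (x - y)^n. -/
open MvPolynomial

/-- The field of fractions of `ℚ[x,y]`. -/
abbrev FracK : Type := FractionRing (MvPolynomial (Fin 2) ℚ)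

/-- The image of the variable `x` in the field of fractions of `ℚ[x,y]`. -/
noncomputable def xK : FracK := algebraMap (MvPolynomial (Fin 2) ℚ) FracK (X 0)

/-- The image of the variable `y` in the field of fractions of `ℚ[x,y]`. -/
noncomputable def yK : FracK := algebraMap (MvPolynomial (Fin 2) ℚ) FracK (X 1)

/-!
`x - y` is a constant of `d`, and `w = x⁻¹ y` is an eigenvector of `d` with eigenvalue `x - y`:
`d w = -x⁻² (x y) y + x⁻¹ (x y) = w (x - y)`. By the Leibniz rule each further application
of `d` multiplies `w` by one more factor `x - y`.
-/

namespace Derivation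

/- The `R`-module structure on the target is a separate instance argument: the one found for
`Module ℚ FracK` comes from `OreLocalization` and is not defeq to `Algebra.toModule`. -/
set_option linter.overlappingInstances false

theorem iterate_apply_eq_mul_pow_of_apply_eq_mul {R A : Type*} [CommSemiring R] [CommSemiring A]
    [Algebra R A] [Module R A] (d : Derivation R A A) {w c : A} (hc : d c = 0)
    (hw : d w = w * c) (n : ℕ) :
    (⇑d)^[n] w = w * c ^ n := by
  induction n with
  | zero => simp
  | succ n ih =>
    rw [Function.iterate_succ_apply', ih, leibniz, leibniz_pow, hc, hw]
    simp only [smul_eq_mul, pow_succ]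
    ring

theorem apply_inv_mul_of_apply_eq {R K : Type*} [CommRing R] [Field K] [Algebra R K] [Module R K]
    (d : Derivation R K K) {x y : K} (hx : d x = x * y) (hy : d y = x * y) :
    d (x⁻¹ * y) = x⁻¹ * y * (x - y) := by
  rcases eq_or_ne x 0 with rfl | hx0
  · simp
  rw [leibniz, leibniz_inv, hx, hy, smul_eq_mul, smul_eq_mul, smul_eq_mul]
  field_simp
  ring

end Derivation

theorem stmt3 (d : Derivation ℚ FracK FracK)
    (hx : d xK = xK * yK) (hy : d yK = xK * yK) (n : ℕ) :
    (⇑d)^[n] (xK⁻¹ * yK) = xK⁻¹ * yK * (xK - yK) ^ n := by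
  have hconst : d (xK - yK) = 0 := by rw [map_sub, hx, hy, sub_self]
  have heigen : d (xK⁻¹ * yK) = xK⁻¹ * yK * (xK - yK) := d.apply_inv_mul_of_apply_eq hx hy
  exact d.iterate_apply_eq_mul_pow_of_apply_eq_mul hconst heigen n
end

section
/- Let D be the unique ℚ-linear derivation of the polynomial ring ℚ[x,y] satisfying D(x) = xy² and D(y) = xy². Then for every n ≥ 1, D^n(x) = Σ_{m=1}^{n} C(n,m) x^m y^{2n+1-m}, where C(n,m) denotes the number of Stirling permutations of the multiset [n]_2 with exactly m-1 ascents. -/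
open MvPolynomial

/-- The number of ascents of a word `w 0, w 1, …` given as a function on `Fin m`. -/
def wordAscents {m : ℕ} {α : Type*} [LinearOrder α] (w : Fin m → α) : ℕ :=
  ((List.ofFn w).zip (List.ofFn w).tail).countP fun p => decide (p.1 < p.2)

/-- A Stirling permutation of the multiset `{1,1,2,2,…,n,n}`: every value occurs exactly
twice, and whenever `j < k < l` and `w j = w l` one has `w k > w j`. -/
def IsStirlingPerm {n : ℕ} (w : Fin (2 * n) → Fin n) : Prop :=
  (∀ v : Fin n, (Finset.univ.filter fun i => w i = v).card = 2) ∧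
  (∀ j k l : Fin (2 * n), j < k → k < l → w j = w l → w j < w k)

/-- `stirlingC n m` is the number of Stirling permutations of `{1,1,…,n,n}` with
exactly `m - 1` ascents. -/
noncomputable def stirlingC (n m : ℕ) : ℕ :=
  Nat.card {w : Fin (2 * n) → Fin n // IsStirlingPerm w ∧ wordAscents w = m - 1}

/-!
Read a Stirling permutation of order `n` as a list over `0, …, n - 1`. In one of order `n + 1`
the two copies of the largest letter `n` are adjacent, and deleting them leaves one of order `n`;
conversely the block `n n` may be inserted into any of the `2n + 1` gaps of a Stirling permutation
of order `n`. If the word has `a` ascents, exactly `a + 1` of these gaps (the front one and those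
splitting an ascent) create no new ascent, and each of the other `2n - a` creates one. So with
`P n = ∑ x ^ (asc π + 1) * y ^ (2n - asc π)`, the terms of all insertions into `π` add up to
`(a + 1) x ^ (a + 1) y ^ (2n - a + 2) + (2n - a) x ^ (a + 2) y ^ (2n - a + 1)`,
which is `D (x ^ (a + 1) y ^ (2n - a))`. Hence `D (P n) = P (n + 1)`, and as `P 0 = x`,
`D^[n] x = P n`.
-/

namespace StirlingPermutation

open scoped List

section Ascents

variable {α β : Type*} [LinearOrder α] [LinearOrder β]

def ascents (l : List α) : ℕ :=
  (l.zip l.tail).countP fun p => decide (p.1 < p.2)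

@[simp] lemma ascents_nil : ascents ([] : List α) = 0 := rfl

@[simp] lemma ascents_singleton (a : α) : ascents [a] = 0 := rfl

@[simp] lemma ascents_cons_cons (a b : α) (l : List α) :
    ascents (a :: b :: l) = ascents (b :: l) + if a < b then 1 else 0 := by
  simp [ascents, List.countP_cons]

lemma ascents_le_length (l : List α) : ascents l ≤ l.length :=
  List.countP_le_length.trans (by simp)

lemma ascents_map {f : α → β} (hf : StrictMono f) (l : List α) :
    ascents (l.map f) = ascents l := by
  simp [ascents, ← List.map_tail, List.zip_map, Function.comp_def, hf.lt_iff_lt]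

end Ascents

section Insertion

variable {α : Type*} {c : α} {l : List α} {g : ℕ}

def insertPair (c : α) (l : List α) (g : ℕ) : List α := l.take g ++ c :: c :: l.drop g

lemma insertPair_perm : insertPair c l g ~ c :: c :: l := by
  conv_rhs => rw [← List.take_append_drop g l]
  exact List.perm_middle.trans (List.perm_middle.cons c)

lemma sublist_insertPair : l <+ insertPair c l g := by
  conv_lhs => rw [← List.take_append_drop g l]
  exact ((List.sublist_cons_self _ _).trans (List.sublist_cons_self _ _)).append_left _

lemma take_insertPair (hg : g ≤ l.length) : (insertPair c l g).take g = l.take g :=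
  List.take_left' (by simpa using hg)

lemma drop_insertPair (hg : g ≤ l.length) : (insertPair c l g).drop (g + 2) = l.drop g := by
  rw [insertPair, ← List.drop_drop, List.drop_left' (by simpa using hg)]
  rfl

section DecidableEq

variable [DecidableEq α]

lemma idxOf_insertPair (hc : c ∉ l) (hg : g ≤ l.length) : (insertPair c l g).idxOf c = g := by
  rw [insertPair, List.idxOf_append_of_notMem (fun h => hc (List.mem_of_mem_take h))]
  simpa using hg

lemma eq_of_insertPair_eq {l' : List α} {g' : ℕ} (hc : c ∉ l) (hc' : c ∉ l')
    (hg : g ≤ l.length) (hg' : g' ≤ l'.length) (h : insertPair c l g = insertPair c l' g') :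
    l = l' ∧ g = g' := by
  obtain rfl : g = g' := by
    rw [← idxOf_insertPair hc hg, h, idxOf_insertPair hc' hg']
  refine ⟨?_, rfl⟩
  rw [← List.take_append_drop g l, ← List.take_append_drop g l', ← take_insertPair hg,
    ← drop_insertPair hg, h, take_insertPair hg', drop_insertPair hg']

lemma filter_insertPair : (insertPair c l g).filter (· != c) = l.filter (· != c) := by
  rw [insertPair, List.filter_append, List.filter_cons_of_neg (by simp),
    List.filter_cons_of_neg (by simp), ← List.filter_append, List.take_append_drop]

end DecidableEq

lemma eq_of_cons_cons_sublist {A B : List α} {b : α} (hA : c ∉ A) (hB : c ∉ B)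
    (h : [c, b, c] <+ A ++ c :: c :: B) : b = c := by
  induction A with
  | nil =>
    have hcB {p : List α} (hp : c ∈ p) : ¬ p <+ B := fun hpB => hB (hpB.subset hp)
    simp only [List.nil_append, List.sublist_cons_iff] at h
    rcases h with (h | ⟨r, hr, h⟩) | ⟨r, hr, h | ⟨r', hr', -⟩⟩
    · exact (hcB (by simp) h).elim
    all_goals obtain ⟨-, rfl⟩ := List.cons.inj hr
    · exact (hcB (by simp) h).elim
    · exact (hcB (by simp) h).elim
    · exact (List.cons.inj hr').1
  | cons a A ih =>
    exact ih (fun h => hA (by simp [h]))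
      (h.of_cons_of_ne (fun hca => hA (by simp [hca])))

end Insertion

section NeutralGaps

variable {α : Type*} [LinearOrder α]

/-- Gap `g` (just before `l[g]`) is neutral if inserting a block of new maxima there creates no
new ascent: it is the front gap or it splits an ascent. -/
def IsNeutralGap (l : List α) (g : ℕ) : Prop :=
  g = 0 ∨ ∃ h : g < l.length, l[g - 1] < l[g]

instance (l : List α) : DecidablePred (IsNeutralGap l) :=
  fun _ => inferInstanceAs (Decidable (_ ∨ _))

lemma ascents_insertPair {c : α} {l : List α} (hl : ∀ a ∈ l, a < c) {g : ℕ}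
    (hg : g ≤ l.length) :
    ascents (insertPair c l g) = ascents l + if IsNeutralGap l g then 0 else 1 := by
  induction l generalizing g with
  | nil =>
    obtain rfl : g = 0 := by simpa using hg
    simp [insertPair, IsNeutralGap]
  | cons a t ih =>
    have hac : a < c := hl a (by simp)
    rcases g with _ | _ | g
    · simp [insertPair, IsNeutralGap, hac.asymm]
    · rcases t with _ | ⟨b, t⟩
      · simp [insertPair, IsNeutralGap, hac]
      · simp [insertPair, IsNeutralGap, hac, (hl b (by simp)).asymm]
        split_ifs <;> omega
    · obtain ⟨b, t, rfl⟩ :=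
        List.exists_cons_of_ne_nil (show t ≠ [] by rintro rfl; simp at hg)
      have := ih (fun b hb => hl b (by simp [hb])) (g := g + 1) (by simpa using hg)
      simp_all [insertPair, IsNeutralGap]
      ring

lemma card_neutralGaps : ∀ l : List α,
    ((Finset.range (l.length + 1)).filter (IsNeutralGap l)).card = ascents l + 1
  | [] => rfl
  | [a] => by
    rw [Finset.card_filter, List.length_singleton, Finset.sum_range_succ, Finset.sum_range_one]
    simp [IsNeutralGap]
  | a :: b :: t => by
    have ih := card_neutralGaps (b :: t)
    rw [Finset.card_filter, Finset.sum_range_succ'] at ih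
    rw [Finset.card_filter, List.length_cons, Finset.sum_range_succ', Finset.sum_range_succ']
    simpa [IsNeutralGap] using ih

lemma card_not_neutralGaps (l : List α) :
    ((Finset.range (l.length + 1)).filter fun g => ¬ IsNeutralGap l g).card =
      l.length - ascents l := by
  have := Finset.card_filter_add_card_filter_not (s := Finset.range (l.length + 1))
    (IsNeutralGap l)
  rw [card_neutralGaps, Finset.card_range] at this
  omega

end NeutralGaps

/-- Stirling permutations of `{0, 0, 1, 1, …, n - 1, n - 1}` as lists; the second condition is
`π_j = π_l → π_j < π_k` for `j < k < l`. -/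
def IsStirlingList (n : ℕ) (l : List ℕ) : Prop :=
  l ~ List.range n ++ List.range n ∧ ∀ a b, [a, b, a] <+ l → a < b

namespace IsStirlingList

variable {n : ℕ} {l : List ℕ}

lemma lt_of_mem (hl : IsStirlingList n l) {a : ℕ} (ha : a ∈ l) : a < n := by
  simpa using hl.1.subset ha

lemma length_eq (hl : IsStirlingList n l) : l.length = 2 * n := by
  simp [hl.1.length_eq, two_mul]

lemma count_eq (hl : IsStirlingList n l) (a : ℕ) : l.count a = if a < n then 2 else 0 := by
  rw [hl.1.count_eq, List.count_append, List.count_range]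
  split_ifs <;> rfl

end IsStirlingList

lemma range_append_range_succ_perm (n : ℕ) :
    List.range (n + 1) ++ List.range (n + 1) ~ n :: n :: (List.range n ++ List.range n) := by
  rw [List.perm_iff_count]
  intro a
  simp only [List.count_append, List.count_range, List.count_cons]
  split_ifs <;> grind

lemma insertPair_perm_range_iff {n : ℕ} {l : List ℕ} {g : ℕ} :
    insertPair n l g ~ List.range (n + 1) ++ List.range (n + 1) ↔
      l ~ List.range n ++ List.range n := by
  have hr := range_append_range_succ_perm n
  exact ⟨fun h => (List.perm_cons n).1 ((List.perm_cons n).1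
      (insertPair_perm.symm.trans (h.trans hr))),
    fun h => insertPair_perm.trans (((h.cons n).cons n).trans hr.symm)⟩

lemma IsStirlingList.of_insertPair {n : ℕ} {l : List ℕ} {g : ℕ}
    (h : IsStirlingList (n + 1) (insertPair n l g)) : IsStirlingList n l :=
  ⟨insertPair_perm_range_iff.1 h.1, fun a b hab => h.2 a b (hab.trans sublist_insertPair)⟩

lemma isStirlingList_insertPair {n : ℕ} {l : List ℕ} (h : IsStirlingList n l) (g : ℕ) :
    IsStirlingList (n + 1) (insertPair n l g) := by
  refine ⟨insertPair_perm_range_iff.2 h.1, fun a b hab => ?_⟩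
  have hn : n ∉ l := fun hn => (h.lt_of_mem hn).false
  by_cases ha : a = n
  · rw [ha] at hab
    have hA : n ∉ l.take g := fun h => hn (List.mem_of_mem_take h)
    have hB : n ∉ l.drop g := fun h => hn (List.mem_of_mem_drop h)
    rw [eq_of_cons_cons_sublist hA hB hab] at hab
    have := (hab.count_le n).trans_eq (insertPair_perm.count_eq n)
    simp [List.count_eq_zero_of_not_mem hn] at this
  have hal : a ∈ l := by
    simpa [ha] using insertPair_perm.subset (hab.subset (List.mem_cons_self ..))
  by_cases hb : b = n
  · exact hb ▸ h.lt_of_mem hal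
  have hl : l.filter (· != n) = l :=
    List.filter_eq_self.2 fun x hx => by simpa using ne_of_mem_of_not_mem hx hn
  have := hab.filter (· != n)
  rw [filter_insertPair, hl, List.filter_eq_self.2 (by simp [ha, hb])] at this
  exact h.2 a b this

/-- The two copies of `n` are adjacent: otherwise they would enclose a smaller letter. -/
lemma exists_insertPair_eq {n : ℕ} {L : List ℕ} (hL : IsStirlingList (n + 1) L) :
    ∃ l g, g ≤ l.length ∧ L = insertPair n l g := by
  obtain ⟨A, R, rfl, hA⟩ := List.eq_append_cons_of_mem (a := n) (hL.1.symm.subset (by simp))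
  have hR : R.count n = 1 := by
    have := hL.count_eq n
    simp [List.count_eq_zero_of_not_mem hA] at this
    omega
  obtain ⟨b, R, rfl⟩ := List.exists_cons_of_ne_nil (show R ≠ [] by rintro rfl; simp at hR)
  obtain rfl : b = n := by
    by_contra hb
    have hnR : n ∈ R := List.count_pos_iff.1 (by simp [hb] at hR; omega)
    have := hL.2 n b (((List.singleton_sublist.2 hnR).cons_cons b).cons_cons n |>.trans
      (List.sublist_append_right A _))
    have := hL.lt_of_mem (show b ∈ A ++ n :: b :: R by simp)
    omega
  refine ⟨A ++ R, A.length, by simp, ?_⟩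
  rw [insertPair, List.take_left, List.drop_left]

lemma IsStirlingList.ascents_le {n : ℕ} {l : List ℕ} (hl : IsStirlingList (n + 1) l) :
    ascents l ≤ n := by
  obtain ⟨l', g, hg, rfl⟩ := exists_insertPair_eq hl
  have hl' := hl.of_insertPair
  rw [ascents_insertPair (fun a ha => hl'.lt_of_mem ha) hg]
  cases n with
  | zero =>
    obtain rfl : l' = [] := List.eq_nil_of_length_eq_zero hl'.length_eq
    obtain rfl : g = 0 := by simpa using hg
    simp [IsNeutralGap]
  | succ n =>
    have := hl'.ascents_le
    split_ifs <;> omega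

def insertMax (n : ℕ) (p : {l : List ℕ // IsStirlingList n l} × Fin (2 * n + 1)) :
    {L : List ℕ // IsStirlingList (n + 1) L} :=
  ⟨insertPair n p.1 p.2, isStirlingList_insertPair p.1.2 _⟩

lemma insertMax_bijective (n : ℕ) : Function.Bijective (insertMax n) := by
  refine ⟨fun ⟨l, g⟩ ⟨l', g'⟩ h => ?_, fun L => ?_⟩
  · have hn (l : {l : List ℕ // IsStirlingList n l}) : n ∉ l.1 :=
      fun h => (l.2.lt_of_mem h).false
    have hg (l : {l : List ℕ // IsStirlingList n l}) (g : Fin (2 * n + 1)) :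
        (g : ℕ) ≤ l.1.length := by
      rw [l.2.length_eq]; omega
    obtain ⟨hl, hg⟩ := eq_of_insertPair_eq (hn l) (hn l') (hg l g) (hg l' g')
      (congrArg Subtype.val h)
    exact Prod.ext (Subtype.ext hl) (Fin.ext hg)
  · obtain ⟨l, g, hg, hL⟩ := exists_insertPair_eq L.2
    have hl : IsStirlingList n l := (hL ▸ L.2).of_insertPair
    exact ⟨(⟨l, hl⟩, ⟨g, by rw [hl.length_eq] at hg; omega⟩), Subtype.ext hL.symm⟩

section Words

lemma triple_sublist_ofFn_iff {α : Type*} {m : ℕ} {f : Fin m → α} {a b c : α} :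
    [a, b, c] <+ List.ofFn f ↔
      ∃ i j k, i < j ∧ j < k ∧ f i = a ∧ f j = b ∧ f k = c := by
  rw [List.sublist_iff_exists_fin_orderEmbedding_get_eq]
  constructor
  · rintro ⟨e, he⟩
    have h0 := he ⟨0, by simp⟩
    have h1 := he ⟨1, by simp⟩
    have h2 := he ⟨2, by simp⟩
    simp only [List.get_ofFn] at h0 h1 h2
    exact ⟨_, _, _, e.strictMono (by simp), e.strictMono (by simp), h0.symm, h1.symm, h2.symm⟩
  · rintro ⟨i, j, k, hij, hjk, rfl, rfl, rfl⟩
    let σ : Fin 3 → Fin (List.ofFn f).length := fun x => Fin.cast (by simp) (![i, j, k] x)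
    have hσ : StrictMono σ := by
      rw [Fin.strictMono_iff_lt_succ]
      intro x
      fin_cases x <;> simpa [σ]
    refine ⟨OrderEmbedding.ofStrictMono σ hσ, fun x => ?_⟩
    fin_cases x <;> simp [σ]

variable {n : ℕ}

lemma isStirlingPerm_iff_isStirlingList (w : Fin (2 * n) → Fin n) :
    IsStirlingPerm w ↔ IsStirlingList n ((List.ofFn w).map Fin.val) := by
  have hcount (v : Fin n) :
      ((List.ofFn w).map Fin.val).count (v : ℕ) = (Finset.univ.filter fun i => w i = v).card := by
    rw [List.count_map_of_injective _ _ Fin.val_injective, ← Multiset.coe_count,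
      ← Fin.univ_val_map, Multiset.count_map]
    simp only [eq_comm]
    rfl
  have hcount_ge {a : ℕ} (ha : n ≤ a) : ((List.ofFn w).map Fin.val).count a = 0 :=
    List.count_eq_zero_of_not_mem (by simp; omega)
  refine and_congr ⟨fun h => List.perm_iff_count.2 fun a => ?_, fun h v => ?_⟩ ?_
  · simp only [List.count_append, List.count_range]
    by_cases ha : a < n
    · simpa [ha] using (hcount ⟨a, ha⟩).trans (h _)
    · rw [hcount_ge (not_lt.1 ha), if_neg ha]
  · simpa [← hcount, List.count_append, List.count_range] using h.count_eq v
  · rw [List.map_ofFn]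
    simp only [triple_sublist_ofFn_iff, Function.comp_apply]
    constructor
    · rintro h a b ⟨i, j, k, hij, hjk, rfl, rfl, hk⟩
      exact h i j k hij hjk (Fin.ext hk.symm)
    · intro h j k l hjk hkl he
      exact h _ _ ⟨j, k, l, hjk, hkl, rfl, rfl, congrArg Fin.val he.symm⟩

lemma exists_map_val_ofFn_eq {l : List ℕ} (hl : IsStirlingList n l) :
    ∃ w : Fin (2 * n) → Fin n, (List.ofFn w).map Fin.val = l :=
  ⟨fun i => ⟨l[i.1]'(hl.length_eq.symm ▸ i.2), hl.lt_of_mem (List.getElem_mem _)⟩,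
    List.ext_getElem (by simp [hl.length_eq]) (by simp)⟩

variable (n) in
noncomputable def stirlingPermEquiv :
    {w : Fin (2 * n) → Fin n // IsStirlingPerm w} ≃ {l : List ℕ // IsStirlingList n l} :=
  Equiv.ofBijective
    (fun w => ⟨(List.ofFn w.1).map Fin.val, (isStirlingPerm_iff_isStirlingList w.1).1 w.2⟩)
    ⟨fun _ _ h => Subtype.ext <| List.ofFn_injective <|
        List.map_injective_iff.2 Fin.val_injective (congrArg Subtype.val h),
      fun l => by
        obtain ⟨w, hw⟩ := exists_map_val_ofFn_eq l.2
        exact ⟨⟨w, (isStirlingPerm_iff_isStirlingList w).2 (hw ▸ l.2)⟩, Subtype.ext hw⟩⟩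

lemma ascents_stirlingPermEquiv (w : {w : Fin (2 * n) → Fin n // IsStirlingPerm w}) :
    ascents (stirlingPermEquiv n w).1 = wordAscents w.1 :=
  ascents_map Fin.val_strictMono _

instance : Finite {l : List ℕ // IsStirlingList n l} :=
  Finite.of_equiv _ (stirlingPermEquiv n)

noncomputable instance : Fintype {l : List ℕ // IsStirlingList n l} :=
  Fintype.ofFinite _

lemma stirlingC_eq_card {m : ℕ} (hm : 1 ≤ m) :
    stirlingC n m = (Finset.univ.filter fun l : {l : List ℕ // IsStirlingList n l} =>
      ascents l.1 + 1 = m).card := by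
  rw [← Fintype.card_subtype, ← Nat.card_eq_fintype_card, stirlingC]
  exact Nat.card_congr <| (Equiv.subtypeSubtypeEquivSubtypeInter _ _).symm.trans <|
    (stirlingPermEquiv n).subtypeEquiv fun w => by rw [ascents_stirlingPermEquiv]; omega

end Words

section Derivation

variable {R : Type*} [CommSemiring R]
  (D : Derivation R (MvPolynomial (Fin 2) R) (MvPolynomial (Fin 2) R))

lemma derivation_X_zero_pow (hx : D (X 0) = X 0 * X 1 ^ 2) (m : ℕ) :
    D (X 0 ^ m) = m • (X 0 ^ m * X 1 ^ 2) := by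
  cases m with
  | zero => simp
  | succ m => rw [Derivation.leibniz_pow, hx, Nat.add_sub_cancel, smul_eq_mul]; ring

lemma derivation_X_one_pow (hy : D (X 1) = X 0 * X 1 ^ 2) (k : ℕ) :
    D (X 1 ^ k) = k • (X 0 * X 1 ^ (k + 1)) := by
  cases k with
  | zero => simp
  | succ k => rw [Derivation.leibniz_pow, hy, Nat.add_sub_cancel, smul_eq_mul]; ring

lemma derivation_monomial (hx : D (X 0) = X 0 * X 1 ^ 2) (hy : D (X 1) = X 0 * X 1 ^ 2)
    (m k : ℕ) : D (X 0 ^ m * X 1 ^ k) =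
      m • (X 0 ^ m * X 1 ^ (k + 2)) + k • (X 0 ^ (m + 1) * X 1 ^ (k + 1)) := by
  rw [Derivation.leibniz, derivation_X_zero_pow D hx, derivation_X_one_pow D hy, smul_eq_mul,
    smul_eq_mul]
  ring

variable (R) in
/-- For a Stirling permutation of order `n` with `m - 1` ascents this is `x ^ m y ^ (2n + 1 - m)`,
its term in the theorem. -/
noncomputable def ascentMonomial (l : List ℕ) : MvPolynomial (Fin 2) R :=
  X 0 ^ (ascents l + 1) * X 1 ^ (l.length - ascents l)

lemma sum_ascentMonomial_insertPair (hx : D (X 0) = X 0 * X 1 ^ 2)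
    (hy : D (X 1) = X 0 * X 1 ^ 2) {c : ℕ} {l : List ℕ} (hl : ∀ a ∈ l, a < c) :
    ∑ g ∈ Finset.range (l.length + 1), ascentMonomial R (insertPair c l g) =
      D (ascentMonomial R l) := by
  have hle := ascents_le_length l
  have hterm : ∀ g ∈ Finset.range (l.length + 1), ascentMonomial R (insertPair c l g) =
      if IsNeutralGap l g then X 0 ^ (ascents l + 1) * X 1 ^ (l.length - ascents l + 2)
      else X 0 ^ (ascents l + 1 + 1) * X 1 ^ (l.length - ascents l + 1) := by
    intro g hg
    have hg : g ≤ l.length := Nat.lt_succ_iff.1 (Finset.mem_range.1 hg)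
    have hlen : (insertPair c l g).length = l.length + 2 := by simp [insertPair]; omega
    rw [ascentMonomial, ascents_insertPair hl hg, hlen]
    split_ifs <;> congr 2 <;> omega
  rw [Finset.sum_congr rfl hterm, Finset.sum_ite, Finset.sum_const, Finset.sum_const,
    card_neutralGaps, card_not_neutralGaps, ascentMonomial, derivation_monomial D hx hy]

variable (R) in
noncomputable def stirlingPoly (n : ℕ) : MvPolynomial (Fin 2) R :=
  ∑ l : {l : List ℕ // IsStirlingList n l}, ascentMonomial R l.1

lemma derivation_stirlingPoly (hx : D (X 0) = X 0 * X 1 ^ 2) (hy : D (X 1) = X 0 * X 1 ^ 2)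
    (n : ℕ) : D (stirlingPoly R n) = stirlingPoly R (n + 1) := by
  calc D (stirlingPoly R n)
      = ∑ l : {l : List ℕ // IsStirlingList n l}, ∑ g : Fin (2 * n + 1),
          ascentMonomial R (insertPair n l.1 g) := by
        rw [stirlingPoly, map_sum]
        refine Fintype.sum_congr _ _ fun l => ?_
        rw [Fin.sum_univ_eq_sum_range (fun g => ascentMonomial R (insertPair n l.1 g)),
          ← l.2.length_eq, sum_ascentMonomial_insertPair D hx hy fun a => l.2.lt_of_mem]
    _ = ∑ p, ascentMonomial R (insertMax n p).1 := by rw [Fintype.sum_prod_type]; rfl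
    _ = stirlingPoly R (n + 1) :=
        Fintype.sum_bijective _ (insertMax_bijective n) _ _ fun _ => rfl

lemma stirlingPoly_zero : stirlingPoly R 0 = X 0 := by
  have h0 : IsStirlingList 0 [] := ⟨List.Perm.refl _, by simp⟩
  have hunique (l : {l : List ℕ // IsStirlingList 0 l}) : l = ⟨[], h0⟩ :=
    Subtype.ext (List.eq_nil_of_length_eq_zero l.2.length_eq)
  rw [stirlingPoly, Fintype.sum_eq_single ⟨[], h0⟩ fun l hl => (hl (hunique l)).elim]
  simp [ascentMonomial]

lemma iterate_derivation_X_zero (hx : D (X 0) = X 0 * X 1 ^ 2) (hy : D (X 1) = X 0 * X 1 ^ 2)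
    (n : ℕ) : (⇑D)^[n] (X 0) = stirlingPoly R n := by
  induction n with
  | zero => exact stirlingPoly_zero.symm
  | succ n ih => rw [Function.iterate_succ_apply', ih, derivation_stirlingPoly D hx hy]

end Derivation

lemma stirlingPoly_eq_sum_stirlingC {R : Type*} [CommSemiring R] {n : ℕ} (hn : 1 ≤ n) :
    stirlingPoly R n = ∑ m ∈ Finset.Icc 1 n,
      (stirlingC n m : MvPolynomial (Fin 2) R) * X 0 ^ m * X 1 ^ (2 * n + 1 - m) := by
  obtain ⟨n, rfl⟩ := Nat.exists_eq_add_of_le' hn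
  rw [stirlingPoly, ← Finset.sum_fiberwise_of_maps_to (g := fun l => ascents l.1 + 1)
    (t := Finset.Icc 1 (n + 1)) fun l _ => by simpa using l.2.ascents_le]
  refine Finset.sum_congr rfl fun m hm => ?_
  rw [stirlingC_eq_card (Finset.mem_Icc.1 hm).1, mul_assoc, ← nsmul_eq_mul, ← Finset.sum_const]
  refine Finset.sum_congr rfl fun l hl => ?_
  have hl := (Finset.mem_filter.1 hl).2
  rw [ascentMonomial, l.2.length_eq, hl]
  congr 2
  omega

end StirlingPermutation

theorem stmt4
    (D : Derivation ℚ (MvPolynomial (Fin 2) ℚ) (MvPolynomial (Fin 2) ℚ))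
    (hx : D (X 0) = X 0 * X 1 ^ 2) (hy : D (X 1) = X 0 * X 1 ^ 2)
    (n : ℕ) (hn : 1 ≤ n) :
    (⇑D)^[n] (X 0) =
      ∑ m ∈ Finset.Icc 1 n,
        (stirlingC n m : MvPolynomial (Fin 2) ℚ) * X 0 ^ m * X 1 ^ (2 * n + 1 - m) := by
  rw [StirlingPermutation.iterate_derivation_X_zero D hx hy,
    StirlingPermutation.stirlingPoly_eq_sum_stirlingC hn]
end

section
/- Let D be the unique ℚ-linear derivation of the polynomial ring ℚ[x,z] satisfying D(z) = x²z and D(x) = x². Then for every n ≥ 1, D^n(z) = x^n z Σ_{k=1}^{n} L(n,k) x^k, where L(n,k) = C(n-1,k-1) · n!/k! is the signless Lah number. -/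
/-!
Since `D x = x²` and `D z = x² z`, the Leibniz rule gives `D (x^m z) = m x^(m+1) z + x^(m+2) z`.
Hence if `D^n z = ∑ₖ cₙₖ x^(n+k) z`, the coefficients of `D^(n+1) z` are
`c₍ₙ₊₁₎ₖ = (n + k) cₙₖ + cₙ₍ₖ₋₁₎`, which is the recurrence of the signless Lah numbers.
-/

open MvPolynomial

/-- The signless Lah number `L(n,k) = C(n-1,k-1) · n!/k!`, as a rational number. -/
def lah (n k : ℕ) : ℚ :=
  ((n - 1).choose (k - 1) : ℚ) * (n.factorial : ℚ) / (k.factorial : ℚ)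

open Finset

theorem lah_one_right (n : ℕ) : lah n 1 = n.factorial := by
  simp [lah]

theorem lah_eq_zero_of_lt {n k : ℕ} (hn : 1 ≤ n) (h : n < k) : lah n k = 0 := by
  simp [lah, Nat.choose_eq_zero_of_lt (show n - 1 < k - 1 by omega)]

theorem lah_succ_succ {n k : ℕ} (hn : 1 ≤ n) (hk : 1 ≤ k) :
    lah (n + 1) (k + 1) = (n + k + 1) * lah n (k + 1) + lah n k := by
  obtain ⟨m, rfl⟩ : ∃ m, n = m + 1 := ⟨n - 1, by omega⟩
  obtain ⟨i, rfl⟩ : ∃ i, k = i + 1 := ⟨k - 1, by omega⟩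
  have pascal : ((m + 1).choose (i + 1) : ℚ) = m.choose i + m.choose (i + 1) := by
    exact_mod_cast Nat.choose_succ_succ' m i
  have absorb : ((m + 1 : ℕ) : ℚ) * m.choose i = (m + 1).choose (i + 1) * (i + 1) := by
    exact_mod_cast Nat.add_one_mul_choose_eq m i
  simp only [lah, Nat.add_sub_cancel, Nat.factorial_succ]
  push_cast at absorb ⊢
  field_simp
  linear_combination (m + i + 3 : ℚ) * pascal + absorb

namespace Derivation

theorem apply_pow_mul {R A : Type*} [CommSemiring R] [CommSemiring A] [Algebra R A]
    (D : Derivation R A A) {x z : A} (hx : D x = x ^ 2) (hz : D z = x ^ 2 * z) (m : ℕ) :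
    D (x ^ m * z) = m • (x ^ (m + 1) * z) + x ^ (m + 2) * z := by
  rw [leibniz, leibniz_pow, hx, hz, smul_eq_mul, smul_eq_mul, smul_eq_mul]
  rcases m with _ | m
  · simp
  · simp only [Nat.add_sub_cancel, nsmul_eq_mul]
    ring

theorem iterate_apply_eq_sum_lah {A : Type*} [CommRing A] [Algebra ℚ A] (D : Derivation ℚ A A)
    {x z : A} (hx : D x = x ^ 2) (hz : D z = x ^ 2 * z) {n : ℕ} (hn : 1 ≤ n) :
    D^[n] z = ∑ j ∈ range n, lah n (j + 1) • (x ^ (n + j + 1) * z) := by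
  induction n, hn using Nat.le_induction with
  | base => simp [hz, lah_one_right]
  | succ n hn ih =>
    have hD (j : ℕ) : D (lah n (j + 1) • (x ^ (n + j + 1) * z)) =
        ((n + j + 1) * lah n (j + 1)) • (x ^ (n + j + 2) * z) +
          lah n (j + 1) • (x ^ (n + j + 3) * z) := by
      rw [map_smul, D.apply_pow_mul hx hz, smul_add, ← Nat.cast_smul_eq_nsmul ℚ, smul_smul]
      push_cast
      ring_nf
    set f : ℕ → A := fun j => ((n + j + 1) * lah n (j + 1)) • (x ^ (n + j + 2) * z) with hf
    -- `L(n, n+1) = 0`, so the first sum may run up to `n` and then be shifted like the others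
    have hf_top : ∑ j ∈ range n, f j = ∑ j ∈ range (n + 1), f j := by
      simp [sum_range_succ, hf, lah_eq_zero_of_lt hn (lt_add_one n)]
    have hlah (j : ℕ) : lah (n + 1) (j + 2) = (n + j + 2) * lah n (j + 2) + lah n (j + 1) := by
      rw [lah_succ_succ hn (Nat.le_add_left 1 j)]
      push_cast
      ring
    have hlah_one : lah (n + 1) 1 = (n + 1) * lah n 1 := by
      simp [lah_one_right, Nat.factorial_succ]
    rw [Function.iterate_succ_apply', ih, map_sum, sum_congr rfl fun j _ => hD j,
      sum_add_distrib, hf_top, sum_range_succ', sum_range_succ' _ n]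
    simp only [hf, hlah, hlah_one, add_smul, sum_add_distrib]
    push_cast
    ring_nf

end Derivation

/-- Here `X 0` plays the role of `x` and `X 1` plays the role of `z`. -/
theorem stmt7
    (D : Derivation ℚ (MvPolynomial (Fin 2) ℚ) (MvPolynomial (Fin 2) ℚ))
    (hz : D (X 1) = X 0 ^ 2 * X 1) (hx : D (X 0) = X 0 ^ 2)
    (n : ℕ) (hn : 1 ≤ n) :
    (⇑D)^[n] (X 1) =
      X 0 ^ n * X 1 * ∑ k ∈ Finset.Icc 1 n, C (lah n k) * X 0 ^ k := by
  rw [D.iterate_apply_eq_sum_lah hx hz hn, ← Ico_add_one_right_eq_Icc, sum_Ico_eq_sum_range,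
    Nat.add_sub_cancel, mul_sum]
  refine sum_congr rfl fun j _ => ?_
  rw [smul_eq_C_mul, add_comm 1 j]
  ring
end

section
/- Let D be the unique ℚ-linear derivation of the polynomial ring ℚ[x,y] satisfying D(x) = xy and D(y) = x. Then for every n ≥ 0, D^n(x) = Σ_T x^{l(T)} y^{u(T)}, where the sum runs over all 0-1-2 increasing trees T with vertex set {0,1,…,n}, l(T) is the number of leaves of T (vertices of degree 0) and u(T) is the number of vertices of T of degree 1. -/
open MvPolynomial

def deg {n : ℕ} (p : Fin n → Fin (n + 1)) (v : Fin (n + 1)) : ℕ :=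
  (Finset.univ.filter fun i => p i = v).card

def IsIncreasingTree {n : ℕ} (p : Fin n → Fin (n + 1)) : Prop :=
  ∀ i : Fin n, (p i : ℕ) ≤ (i : ℕ)

def IsTree012 {n : ℕ} (p : Fin n → Fin (n + 1)) : Prop :=
  IsIncreasingTree p ∧ ∀ v : Fin (n + 1), deg p v ≤ 2

instance {n : ℕ} : DecidablePred (fun p : Fin n → Fin (n + 1) => IsTree012 p) :=
  fun p => inferInstanceAs (Decidable
    ((∀ i : Fin n, (p i : ℕ) ≤ (i : ℕ)) ∧ ∀ v : Fin (n + 1), deg p v ≤ 2))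

namespace Stmt8Aux

open Finset

variable {n : ℕ}

/-- Extend a tree on `[n]` by attaching a new vertex `n+1` as a child of `v`. -/
def ext (p : Fin n → Fin (n + 1)) (v : Fin (n + 1)) : Fin (n + 1) → Fin (n + 2) :=
  Fin.lastCases v.castSucc (fun i => (p i).castSucc)

@[simp] lemma ext_castSucc (p : Fin n → Fin (n + 1)) (v : Fin (n + 1)) (i : Fin n) :
    ext p v i.castSucc = (p i).castSucc := Fin.lastCases_castSucc i

@[simp] lemma ext_last (p : Fin n → Fin (n + 1)) (v : Fin (n + 1)) :
    ext p v (Fin.last n) = v.castSucc := Fin.lastCases_last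

lemma deg_eq_sum (p : Fin n → Fin (n + 1)) (w : Fin (n + 1)) :
    deg p w = ∑ i, if p i = w then 1 else 0 := Finset.card_filter _ _

lemma deg_ext_castSucc (p : Fin n → Fin (n + 1)) (v u : Fin (n + 1)) :
    deg (ext p v) u.castSucc = deg p u + if v = u then 1 else 0 := by
  rw [deg_eq_sum, Fin.sum_univ_castSucc, deg_eq_sum]
  simp [Fin.castSucc_inj]

lemma deg_ext_last (p : Fin n → Fin (n + 1)) (v : Fin (n + 1)) :
    deg (ext p v) (Fin.last (n + 1)) = 0 := by
  rw [deg_eq_sum, Fin.sum_univ_castSucc]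
  simp [(Fin.castSucc_lt_last _).ne]

lemma card_deg_ext (p : Fin n → Fin (n + 1)) (v : Fin (n + 1)) (k : ℕ) :
    (univ.filter fun w => deg (ext p v) w = k).card
      = (univ.filter fun u => deg p u + (if v = u then 1 else 0) = k).card
        + (if k = 0 then 1 else 0) := by
  rw [card_filter, Fin.sum_univ_castSucc, card_filter]
  simp [deg_ext_castSucc, deg_ext_last, eq_comm]

lemma card0_of_deg0 {p : Fin n → Fin (n + 1)} {v : Fin (n + 1)} (h : deg p v = 0) :
    (univ.filter fun w => deg (ext p v) w = 0).card
      = (univ.filter fun u => deg p u = 0).card := by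
  rw [card_deg_ext, if_pos rfl]
  have he : (univ.filter fun u => deg p u + (if v = u then 1 else 0) = 0)
      = (univ.filter fun u => deg p u = 0).erase v := by
    ext u
    simp only [mem_filter, mem_univ, true_and, mem_erase]
    rcases eq_or_ne v u with rfl | hne
    · simp
    · simp [if_neg hne, hne.symm]
  rw [he]
  exact Finset.card_erase_add_one (by simp [h])

lemma card1_of_deg0 {p : Fin n → Fin (n + 1)} {v : Fin (n + 1)} (h : deg p v = 0) :
    (univ.filter fun w => deg (ext p v) w = 1).card
      = (univ.filter fun u => deg p u = 1).card + 1 := by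
  rw [card_deg_ext, if_neg one_ne_zero, add_zero]
  have he : (univ.filter fun u => deg p u + (if v = u then 1 else 0) = 1)
      = insert v (univ.filter fun u => deg p u = 1) := by
    ext u
    simp only [mem_filter, mem_univ, true_and, mem_insert]
    rcases eq_or_ne v u with rfl | hne
    · simp [h]
    · simp [if_neg hne, hne.symm]
  rw [he, Finset.card_insert_of_notMem (by simp [h])]

lemma card0_of_deg1 {p : Fin n → Fin (n + 1)} {v : Fin (n + 1)} (h : deg p v = 1) :
    (univ.filter fun w => deg (ext p v) w = 0).card
      = (univ.filter fun u => deg p u = 0).card + 1 := by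
  rw [card_deg_ext, if_pos rfl]
  have he : (univ.filter fun u => deg p u + (if v = u then 1 else 0) = 0)
      = (univ.filter fun u => deg p u = 0) := by
    apply filter_congr
    intro u _
    rcases eq_or_ne v u with rfl | hne
    · simp [h]
    · simp [if_neg hne]
  rw [he]

lemma card1_of_deg1 {p : Fin n → Fin (n + 1)} {v : Fin (n + 1)} (h : deg p v = 1) :
    (univ.filter fun w => deg (ext p v) w = 1).card + 1
      = (univ.filter fun u => deg p u = 1).card := by
  rw [card_deg_ext, if_neg one_ne_zero, add_zero]
  have he : (univ.filter fun u => deg p u + (if v = u then 1 else 0) = 1)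
      = (univ.filter fun u => deg p u = 1).erase v := by
    ext u
    simp only [mem_filter, mem_univ, true_and, mem_erase]
    rcases eq_or_ne v u with rfl | hne
    · simp [h]
    · simp [if_neg hne, hne.symm]
  rw [he]
  exact Finset.card_erase_add_one (by simp [h])

lemma isTree012_ext_iff (p : Fin n → Fin (n + 1)) (v : Fin (n + 1)) :
    IsTree012 (ext p v) ↔ IsTree012 p ∧ deg p v ≤ 1 := by
  constructor
  · rintro ⟨hinc, hdeg⟩
    refine ⟨⟨fun i => ?_, fun u => ?_⟩, ?_⟩
    · have := hinc i.castSucc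
      simpa using this
    · have := hdeg u.castSucc
      rw [deg_ext_castSucc] at this
      omega
    · have := hdeg v.castSucc
      rw [deg_ext_castSucc, if_pos rfl] at this
      omega
  · rintro ⟨⟨hinc, hdeg⟩, hv⟩
    refine ⟨fun i => ?_, fun w => ?_⟩
    · induction i using Fin.lastCases with
      | last =>
        simp only [ext_last, Fin.coe_castSucc, Fin.val_last]
        exact Nat.lt_succ_iff.mp v.isLt
      | cast j => simpa using hinc j
    · induction w using Fin.lastCases with
      | last => simp [deg_ext_last]
      | cast u =>
        rw [deg_ext_castSucc]
        split_ifs with hh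
        · subst hh; omega
        · have := hdeg u; omega

def trunc (x : Fin (n + 2)) : Fin (n + 1) := ⟨min x.1 n, by omega⟩

lemma castSucc_trunc {x : Fin (n + 2)} (h : (x : ℕ) ≤ n) : (trunc x).castSucc = x := by
  apply Fin.ext
  simp only [Fin.coe_castSucc, trunc]
  omega

@[simp] lemma trunc_castSucc (x : Fin (n + 1)) : trunc x.castSucc = x := by
  apply Fin.ext
  have := x.isLt
  simp only [trunc, Fin.coe_castSucc]
  omega

lemma ext_trunc (q : Fin (n + 1) → Fin (n + 2)) (hq : IsIncreasingTree q) :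
    ext (fun i => trunc (q i.castSucc)) (trunc (q (Fin.last n))) = q := by
  funext w
  induction w using Fin.lastCases with
  | last =>
    rw [ext_last, castSucc_trunc]
    have := hq (Fin.last n)
    simpa using this
  | cast i =>
    rw [ext_castSucc, castSucc_trunc]
    have := hq i.castSucc
    have hi := i.isLt
    simp only [Fin.coe_castSucc] at this
    omega

lemma D_mon (D : Derivation ℚ (MvPolynomial (Fin 2) ℚ) (MvPolynomial (Fin 2) ℚ))
    (hx : D (X 0) = X 0 * X 1) (hy : D (X 1) = X 0) (l u : ℕ) :
    D (X 0 ^ l * X 1 ^ u) =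
      l • (X 0 ^ l * X 1 ^ (u + 1)) + u • (X 0 ^ (l + 1) * X 1 ^ (u - 1)) := by
  rw [Derivation.leibniz, Derivation.leibniz_pow, Derivation.leibniz_pow, hx, hy]
  rcases l with _ | l
  · simp only [smul_eq_mul, nsmul_eq_mul]
    push_cast
    ring
  · simp only [smul_eq_mul, nsmul_eq_mul, Nat.add_sub_cancel]
    push_cast
    ring

end Stmt8Aux

open Stmt8Aux Finset

theorem stmt8
    (D : Derivation ℚ (MvPolynomial (Fin 2) ℚ) (MvPolynomial (Fin 2) ℚ))
    (hx : D (X 0) = X 0 * X 1) (hy : D (X 1) = X 0)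
    (n : ℕ) :
    (⇑D)^[n] (X 0) =
      ∑ p ∈ Finset.univ.filter (fun p : Fin n → Fin (n + 1) => IsTree012 p),
        X 0 ^ (Finset.univ.filter fun v => deg p v = 0).card *
          X 1 ^ (Finset.univ.filter fun v => deg p v = 1).card := by
  induction n with
  | zero =>
    have hall : ∀ p : Fin 0 → Fin 1, IsTree012 p :=
      fun p => ⟨fun i => i.elim0, fun v => by simp [deg]⟩
    rw [Finset.filter_true_of_mem (fun p _ => hall p)]
    rw [Fintype.sum_unique]
    simp [deg]
  | succ n ih =>
    rw [Function.iterate_succ_apply', ih, map_sum]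
    have key : ∀ p ∈ univ.filter (fun p : Fin n → Fin (n + 1) => IsTree012 p),
        D (X 0 ^ (univ.filter fun v => deg p v = 0).card *
            X 1 ^ (univ.filter fun v => deg p v = 1).card)
          = ∑ v ∈ univ.filter (fun v => deg p v ≤ 1),
              (X (0 : Fin 2) ^ (univ.filter fun w => deg (ext p v) w = 0).card *
                X 1 ^ (univ.filter fun w => deg (ext p v) w = 1).card) := by
      intro p _
      rw [D_mon D hx hy]
      have hsplit : (univ.filter fun v : Fin (n + 1) => deg p v ≤ 1)
          = (univ.filter fun v => deg p v = 0) ∪ (univ.filter fun v => deg p v = 1) := by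
        rw [← filter_or]
        apply filter_congr
        intro v _
        omega
      have hdisj : Disjoint (univ.filter fun v : Fin (n + 1) => deg p v = 0)
          (univ.filter fun v => deg p v = 1) := by
        rw [Finset.disjoint_left]
        intro a ha hb
        simp only [mem_filter] at ha hb
        omega
      rw [hsplit, Finset.sum_union hdisj]
      congr 1
      · have e1 : ∑ v ∈ filter (fun v : Fin (n + 1) => deg p v = 0) univ,
            ((X (0 : Fin 2) : MvPolynomial (Fin 2) ℚ) ^ (univ.filter fun w => deg (ext p v) w = 0).card *
              X 1 ^ (univ.filter fun w => deg (ext p v) w = 1).card)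
            = ∑ _v ∈ filter (fun v : Fin (n + 1) => deg p v = 0) univ,
              (X (0 : Fin 2) ^ (univ.filter fun v => deg p v = 0).card *
                X 1 ^ ((univ.filter fun v => deg p v = 1).card + 1)) :=
          by
          refine Finset.sum_congr rfl fun v hv => ?_
          rw [mem_filter] at hv
          rw [card0_of_deg0 hv.2, card1_of_deg0 hv.2]
        rw [e1, Finset.sum_const]
      · have e2 : ∑ v ∈ filter (fun v : Fin (n + 1) => deg p v = 1) univ,
            ((X (0 : Fin 2) : MvPolynomial (Fin 2) ℚ) ^ (univ.filter fun w => deg (ext p v) w = 0).card *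
              X 1 ^ (univ.filter fun w => deg (ext p v) w = 1).card)
            = ∑ _v ∈ filter (fun v : Fin (n + 1) => deg p v = 1) univ,
              (X (0 : Fin 2) ^ ((univ.filter fun v => deg p v = 0).card + 1) *
                X 1 ^ ((univ.filter fun v => deg p v = 1).card - 1)) :=
          by
          refine Finset.sum_congr rfl fun v hv => ?_
          rw [mem_filter] at hv
          have h1 := card1_of_deg1 hv.2
          rw [card0_of_deg1 hv.2,
            show (univ.filter fun w => deg (ext p v) w = 1).card
              = (univ.filter fun v => deg p v = 1).card - 1 by omega]
        rw [e2, Finset.sum_const]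
    rw [Finset.sum_congr rfl key,
      Finset.sum_sigma' (Finset.univ.filter fun p : Fin n → Fin (n + 1) => IsTree012 p)
        (fun p => univ.filter fun v => deg p v ≤ 1)
        (fun p v => (X (0 : Fin 2) : MvPolynomial (Fin 2) ℚ) ^ (univ.filter fun w => deg (ext p v) w = 0).card *
          X 1 ^ (univ.filter fun w => deg (ext p v) w = 1).card)]
    refine Finset.sum_bij' (fun x _ => ext x.1 x.2)
      (fun q _ => ⟨fun i => trunc (q i.castSucc), trunc (q (Fin.last n))⟩)
      ?_ ?_ ?_ ?_ ?_
    · rintro ⟨p, v⟩ hxx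
      rw [Finset.mem_sigma, mem_filter, mem_filter] at hxx
      rw [mem_filter]
      exact ⟨mem_univ _, (isTree012_ext_iff p v).mpr ⟨hxx.1.2, hxx.2.2⟩⟩
    · intro q hq
      rw [mem_filter] at hq
      have hE := ext_trunc q hq.2.1
      have := (isTree012_ext_iff _ _).mp (hE ▸ hq.2)
      rw [Finset.mem_sigma, mem_filter, mem_filter]
      exact ⟨⟨mem_univ _, this.1⟩, ⟨mem_univ _, this.2⟩⟩
    · rintro ⟨p, v⟩ _
      simp only [ext_castSucc, ext_last, trunc_castSucc]
    · intro q hq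
      rw [mem_filter] at hq
      exact ext_trunc q hq.2.1
    · rintro ⟨p, v⟩ _
      rfl
end

section
/- Let K be the field of fractions of ℚ[x,y] and let d be a ℚ-linear derivation of K satisfying d(x) = xy and d(y) = x. Then for every m ≥ 0, d^{2m+1}(x^{-1}y) = (1 − x^{-1}y²)(y² − 2x)^m and d^{2m}(x^{-1}y) = x^{-1}y (y² − 2x)^m. -/
open MvPolynomial

theorem stmt11 (d : Derivation ℚ FracK FracK)
    (hx : d xK = xK * yK) (hy : d yK = xK) (m : ℕ) :
    (⇑d)^[2 * m + 1] (xK⁻¹ * yK) = (1 - xK⁻¹ * yK ^ 2) * (yK ^ 2 - 2 * xK) ^ m ∧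
    (⇑d)^[2 * m] (xK⁻¹ * yK) = xK⁻¹ * yK * (yK ^ 2 - 2 * xK) ^ m := by
  have hx0 : xK ≠ 0 := by
    rw [xK, map_ne_zero_iff _ (IsFractionRing.injective (MvPolynomial (Fin 2) ℚ) FracK)]
    exact MvPolynomial.X_ne_zero 0
  have hinv : d xK⁻¹ = -xK⁻¹ ^ 2 * (xK * yK) := by
    rw [Derivation.leibniz_inv, hx]; simp [smul_eq_mul]
  have du : d (xK⁻¹ * yK) = 1 - xK⁻¹ * yK ^ 2 := by
    rw [Derivation.leibniz, hinv, hy, smul_eq_mul, smul_eq_mul]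
    field_simp
    ring
  have dv : d (1 - xK⁻¹ * yK ^ 2) = xK⁻¹ * yK * (yK ^ 2 - 2 * xK) := by
    rw [map_sub, Derivation.map_one_eq_zero, Derivation.leibniz, hinv, Derivation.leibniz_pow,
      hy, smul_eq_mul, smul_eq_mul, smul_eq_mul]
    field_simp
    ring
  have d2 : d (2 : FracK) = 0 := by
    rw [show (2 : FracK) = 1 + 1 by norm_num, map_add, Derivation.map_one_eq_zero, add_zero]
  have dw : d (yK ^ 2 - 2 * xK) = 0 := by
    rw [map_sub, Derivation.leibniz_pow, hy, Derivation.leibniz, hx, d2]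
    simp [smul_eq_mul]
    ring
  have dwm : ∀ n : ℕ, d ((yK ^ 2 - 2 * xK) ^ n) = 0 := fun n => by
    rw [Derivation.leibniz_pow, dw]; simp
  induction m with
  | zero =>
    simp [du]
  | succ m ih =>
    obtain ⟨ih1, ih2⟩ := ih
    have h2 : (⇑d)^[2 * (m + 1)] (xK⁻¹ * yK) = xK⁻¹ * yK * (yK ^ 2 - 2 * xK) ^ (m + 1) := by
      have : 2 * (m + 1) = (2 * m + 1) + 1 := by ring
      rw [this, Function.iterate_succ_apply', ih1, Derivation.leibniz, dwm, dv,
        smul_eq_mul, smul_eq_mul]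
      ring
    refine ⟨?_, h2⟩
    rw [Function.iterate_succ_apply', h2, Derivation.leibniz, dwm, du, smul_eq_mul, smul_eq_mul]
    ring
end

section
/- Let D be the unique ℚ-linear derivation of the polynomial ring ℚ[x,y] satisfying D(x) = xy and D(y) = x². Then for every n ≥ 1, D^n(x) = Σ_{k=0}^{⌊n/2⌋} T(n,k) x^{2k+1} y^{n-2k}, where T(n,k) denotes the number of permutations of [n] with exactly k exterior peaks. -/
open MvPolynomial

/-- The number of exterior peaks of a word given as a list: indices `i` (1-based) with
`1 < i < n` and `l_{i-1} < l_i > l_{i+1}`, or `i = 1` and `l_1 > l_2`. -/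
def extPeaksList {α : Type*} [LinearOrder α] (l : List α) : ℕ :=
  ((l.zip (l.tail.zip l.tail.tail)).countP
      fun p => decide (p.1 < p.2.1 ∧ p.2.2 < p.2.1)) +
    (match l with
     | a :: b :: _ => if b < a then 1 else 0
     | _ => 0)

/-- The number of exterior peaks of a permutation of `[n]`, viewing the permutation as
the word `π 0, π 1, …, π (n-1)`. -/
def extPeaks {n : ℕ} (π : Equiv.Perm (Fin n)) : ℕ :=
  extPeaksList (List.ofFn fun i => (π i : ℕ))

/-- `extPeakCount n k` is the number of permutations of `[n]` with exactly `k` exterior peaks. -/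
noncomputable def extPeakCount (n k : ℕ) : ℕ :=
  Nat.card {π : Equiv.Perm (Fin n) // extPeaks π = k}

/-!
Every permutation word of `0, …, n` arises exactly once by inserting the maximum `n` into one
of the `n + 1` slots of a permutation word of `0, …, n - 1`. If that word has `k` exterior
peaks, inserting the maximum right before or right after a peak (`2k` slots, as peaks are never
adjacent) or at the right end leaves `k` peaks, while each of the other `n - 2k` slots creates a
new one. These multiplicities are exactly the coefficients in
`D (x^(2k+1) y^(n-2k)) = (2k+1) x^(2k+1) y^(n+1-2k) + (n-2k) x^(2k+3) y^(n-1-2k)`, so by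
induction `D^n x` is the sum of `x^(2p+1) y^(n-2p)` over the words of length `n`, where `p` is
the number of exterior peaks of the word.
-/

open Finset

namespace List

variable {α : Type*} {w : List α} {i j : ℕ} {x d : α}

lemma getD_insertIdx_of_lt (hj : j < i) : (w.insertIdx i x).getD j d = w.getD j d := by
  simp [getD_eq_getElem?_getD, getElem?_insertIdx_of_lt hj]

lemma getD_insertIdx_self (hi : i ≤ w.length) : (w.insertIdx i x).getD i d = x := by
  simp [getD_eq_getElem?_getD, getElem?_insertIdx_self, hi]

lemma getD_insertIdx_of_gt (hj : i < j) : (w.insertIdx i x).getD j d = w.getD (j - 1) d := by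
  simp [getD_eq_getElem?_getD, getElem?_insertIdx_of_gt hj]

lemma getD_lt_of_forall_lt [LT α] {m : α} (hm : ∀ a ∈ w, a < m) (hj : j < w.length) :
    w.getD j d < m := by
  rw [getD_eq_getElem _ _ hj]
  exact hm _ (getElem_mem hj)

lemma getD_zip_tail_zip_tail (hj : j + 2 < w.length) :
    (w.zip (w.tail.zip w.tail.tail)).getD j (d, d, d) =
      (w.getD j d, w.getD (j + 1) d, w.getD (j + 2) d) := by
  rw [getD_eq_getElem _ _ (by simp; omega), getD_eq_getElem _ _ (by omega),
    getD_eq_getElem _ _ (by omega), getD_eq_getElem _ _ hj]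
  simp

lemma countP_eq_card_filter_getD (p : α → Bool) (w : List α) (d : α) :
    w.countP p = #{j ∈ Finset.range w.length | p (w.getD j d)} := by
  induction w with
  | nil => simp
  | cons a w ih =>
    rw [countP_cons, length_cons, card_filter, Finset.sum_range_succ', ih, card_filter]
    simp

lemma permutations'Aux_eq_map_insertIdx (x : α) (w : List α) :
    w.permutations'Aux x = (range (w.length + 1)).map (w.insertIdx · x) :=
  ext_getElem (by simp [length_permutations'Aux]) fun i _ _ => by
    simp [getElem_permutations'Aux]

lemma ofFn_val_eq_range (n : ℕ) : ofFn (fun i : Fin n => (i : ℕ)) = range n :=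
  ext_getElem (by simp) fun i _ _ => by simp

end List

lemma Fin.val_succAbove_mk {n i : ℕ} (hi : i < n + 1) (j : Fin n) :
    ((⟨i, hi⟩ : Fin (n + 1)).succAbove j : ℕ) =
      if (j : ℕ) < i then (j : ℕ) else j + 1 := by
  rw [Fin.succAbove]
  split_ifs <;> simp_all [Fin.lt_def]

lemma Finset.sum_comp_of_le_one {ι M : Type*} [AddCommMonoid M] {s : Finset ι} {d : ι → ℕ}
    (hd : ∀ i ∈ s, d i ≤ 1) (g : ℕ → M) :
    ∑ i ∈ s, g (d i) = (∑ i ∈ s, d i) • g 1 + (#s - ∑ i ∈ s, d i) • g 0 := by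
  have hcard : ∑ i ∈ s, d i = #{i ∈ s | d i = 1} := by
    rw [card_filter]
    exact sum_congr rfl fun i hi => by have := hd i hi; split_ifs <;> omega
  calc ∑ i ∈ s, g (d i) = ∑ i ∈ s, if d i = 1 then g 1 else g 0 :=
        sum_congr rfl fun i hi => by
          have := hd i hi
          split_ifs with h
          · rw [h]
          · rw [show d i = 0 by omega]
    _ = _ := by
      rw [sum_ite, sum_const, sum_const, hcard,
        ← card_filter_add_card_filter_not (s := s) (fun i => d i = 1), Nat.add_sub_cancel_left]

section ExtPeaks

/-- `j` is a `0`-based position. -/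
def IsExtPeak (w : List ℕ) (j : ℕ) : Prop :=
  j + 1 < w.length ∧ w.getD (j + 1) 0 < w.getD j 0 ∧ (j = 0 ∨ w.getD (j - 1) 0 < w.getD j 0)

instance (w : List ℕ) (j : ℕ) : Decidable (IsExtPeak w j) := by
  unfold IsExtPeak; infer_instance

def extPeakNum (w : List ℕ) : ℕ := #{j ∈ range w.length | IsExtPeak w j}

variable {w : List ℕ} {i j m : ℕ}

lemma IsExtPeak.not_succ (h : IsExtPeak w j) : ¬ IsExtPeak w (j + 1) := by
  rintro ⟨-, h', h''⟩
  simp only [Nat.add_sub_cancel, add_eq_zero, one_ne_zero, and_false, false_or] at h''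
  exact h.2.1.asymm h''

lemma isExtPeak_zero_iff : IsExtPeak w 0 ↔ 1 < w.length ∧ w.getD 1 0 < w.getD 0 0 := by
  simp [IsExtPeak]

lemma isExtPeak_succ_iff : IsExtPeak w (j + 1) ↔
    j + 2 < w.length ∧ w.getD j 0 < w.getD (j + 1) 0 ∧ w.getD (j + 2) 0 < w.getD (j + 1) 0 := by
  simp only [IsExtPeak, Nat.add_sub_cancel, add_eq_zero, one_ne_zero, and_false, false_or]
  tauto

lemma extPeaksList_eq_extPeakNum (w : List ℕ) : extPeaksList w = extPeakNum w := by
  rcases w with _ | ⟨a, _ | ⟨b, r⟩⟩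
  · rfl
  · simp [extPeaksList, extPeakNum, IsExtPeak]
  · set w := a :: b :: r
    have hlen : w.length = r.length + 2 := rfl
    have hinterior : (w.zip (w.tail.zip w.tail.tail)).countP
        (fun p => decide (p.1 < p.2.1 ∧ p.2.2 < p.2.1)) =
          #{j ∈ range r.length | IsExtPeak w (j + 1)} := by
      rw [List.countP_eq_card_filter_getD _ _ (0, 0, 0)]
      have hzip : (w.zip (w.tail.zip w.tail.tail)).length = r.length := by simp [w]; omega
      rw [hzip]
      refine congrArg card (filter_congr fun j hj => ?_)
      have hj : j + 2 < w.length := by have := mem_range.mp hj; omega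
      rw [isExtPeak_succ_iff, List.getD_zip_tail_zip_tail hj]
      simp [hj]
    have hlast : ¬ IsExtPeak w (r.length + 1) := fun h => by have := h.1; omega
    rw [extPeakNum, hlen, card_filter, sum_range_succ', sum_range_succ, if_neg hlast,
      ← card_filter, ← hinterior]
    simp only [isExtPeak_zero_iff]
    simp [extPeaksList, w]

section insertIdx

variable (hi : i ≤ w.length) (hm : ∀ a ∈ w, a < m)
include hi hm

lemma isExtPeak_insertIdx_self : IsExtPeak (w.insertIdx i m) i ↔ i < w.length := by
  simp only [IsExtPeak, List.length_insertIdx_of_le_length hi, List.getD_insertIdx_self hi,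
    List.getD_insertIdx_of_gt (Nat.lt_succ_self i)]
  refine ⟨fun h => by omega, fun h => ⟨by omega, List.getD_lt_of_forall_lt hm h, ?_⟩⟩
  rcases Nat.eq_zero_or_pos i with h0 | h0
  · exact .inl h0
  · rw [List.getD_insertIdx_of_lt (by omega)]
    exact .inr (List.getD_lt_of_forall_lt hm (by omega))

lemma isExtPeak_insertIdx_succAbove (hj : j < w.length) :
    IsExtPeak (w.insertIdx i m) (if j < i then j else j + 1) ↔
      IsExtPeak w j ∧ j + 1 ≠ i ∧ j ≠ i := by
  have hjm := List.getD_lt_of_forall_lt (d := 0) hm hj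
  simp only [IsExtPeak, List.length_insertIdx_of_le_length hi]
  rcases lt_trichotomy (j + 1) i with h | rfl | h
  · rw [if_pos (by omega), List.getD_insertIdx_of_lt h, List.getD_insertIdx_of_lt (by omega),
      List.getD_insertIdx_of_lt (by omega : j - 1 < i)]
    omega
  · rw [if_pos (Nat.lt_succ_self j), List.getD_insertIdx_self hi,
      List.getD_insertIdx_of_lt (Nat.lt_succ_self j)]
    omega
  · rw [if_neg (by omega), List.getD_insertIdx_of_gt (by omega : i < j + 1 + 1),
      List.getD_insertIdx_of_gt (by omega : i < j + 1), Nat.add_sub_cancel, Nat.add_sub_cancel]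
    rcases Nat.lt_or_ge i j with h' | h'
    · rw [List.getD_insertIdx_of_gt h']
      omega
    · obtain rfl : j = i := by omega
      rw [List.getD_insertIdx_self hi]
      omega

end insertIdx

/-- Slot `i` is the gap in front of `w[i]`, where `w.insertIdx i` puts the new letter. -/
def peaksBeside (w : List ℕ) (i : ℕ) : ℕ :=
  #{j ∈ range w.length | IsExtPeak w j ∧ (j + 1 = i ∨ j = i)}

lemma extPeakNum_insertIdx_add_peaksBeside (hi : i ≤ w.length) (hm : ∀ a ∈ w, a < m) :
    extPeakNum (w.insertIdx i m) + peaksBeside w i =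
      extPeakNum w + if i < w.length then 1 else 0 := by
  have hv : extPeakNum (w.insertIdx i m) =
      (∑ j ∈ range w.length, if IsExtPeak w j ∧ j + 1 ≠ i ∧ j ≠ i then 1 else 0) +
        if i < w.length then 1 else 0 := by
    rw [extPeakNum, List.length_insertIdx_of_le_length hi, card_filter,
      ← Fin.sum_univ_eq_sum_range (fun j => if IsExtPeak (w.insertIdx i m) j then 1 else 0),
      Fin.sum_univ_succAbove _ ⟨i, Nat.lt_succ_of_le hi⟩,
      ← Fin.sum_univ_eq_sum_range
        (fun j => if IsExtPeak w j ∧ j + 1 ≠ i ∧ j ≠ i then 1 else 0)]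
    simp only [Fin.val_succAbove_mk, isExtPeak_insertIdx_self hi hm,
      isExtPeak_insertIdx_succAbove hi hm (Fin.is_lt _), add_comm]
  rw [hv, peaksBeside, extPeakNum, card_filter, card_filter, add_right_comm, ← sum_add_distrib]
  congr 1
  refine sum_congr rfl fun j _ => ?_
  grind

lemma peaksBeside_le_one : peaksBeside w i ≤ 1 := by
  refine card_le_one.mpr fun a ha b hb => ?_
  simp only [mem_filter] at ha hb
  by_contra hab
  rcases Nat.lt_or_gt_of_ne hab with h | h
  · obtain rfl : b = a + 1 := by omega
    exact ha.2.1.not_succ hb.2.1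
  · obtain rfl : a = b + 1 := by omega
    exact hb.2.1.not_succ ha.2.1

lemma peaksBeside_length : peaksBeside w w.length = 0 := by
  refine card_eq_zero.mpr (filter_false_of_mem fun j _ h => ?_)
  have := h.1.1
  omega

lemma sum_peaksBeside : ∑ i ∈ range (w.length + 1), peaksBeside w i = 2 * extPeakNum w := by
  simp only [peaksBeside, extPeakNum, card_filter]
  rw [sum_comm, mul_sum]
  refine sum_congr rfl fun j hj => ?_
  rw [← card_filter]
  by_cases hp : IsExtPeak w j
  · have hslots : {i ∈ range (w.length + 1) | IsExtPeak w j ∧ (j + 1 = i ∨ j = i)} =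
        {j, j + 1} := by
      ext i
      simp only [mem_filter, mem_range, mem_insert, mem_singleton, hp, true_and]
      have := mem_range.mp hj
      omega
    rw [hslots, card_pair (by omega), if_pos hp, mul_one]
  · simp [hp]

lemma two_mul_extPeakNum_le : 2 * extPeakNum w ≤ w.length := by
  rw [← sum_peaksBeside, sum_range_succ, peaksBeside_length, add_zero]
  simpa using sum_le_card_nsmul (range w.length) _ 1 fun i _ => peaksBeside_le_one (w := w) (i := i)

lemma sum_extPeakNum_insertIdx {M : Type*} [AddCommMonoid M] (f : ℕ → M)
    (hm : ∀ a ∈ w, a < m) :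
    ∑ i ∈ range (w.length + 1), f (extPeakNum (w.insertIdx i m)) =
      (2 * extPeakNum w + 1) • f (extPeakNum w) +
        (w.length - 2 * extPeakNum w) • f (extPeakNum w + 1) := by
  let d i := peaksBeside w i + if i = w.length then 1 else 0
  have hd : ∀ i ∈ range (w.length + 1),
      extPeakNum (w.insertIdx i m) = extPeakNum w + 1 - d i ∧ d i ≤ 1 := by
    intro i hi
    have hi := Nat.lt_succ_iff.mp (mem_range.mp hi)
    have hins := extPeakNum_insertIdx_add_peaksBeside hi hm
    have hle := peaksBeside_le_one (w := w) (i := i)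
    rcases hi.lt_or_eq with hi | rfl
    · rw [if_pos hi] at hins
      simp only [d, if_neg hi.ne]
      omega
    · rw [if_neg (lt_irrefl _), peaksBeside_length] at hins
      simp only [d, if_true, peaksBeside_length]
      omega
  have hsum : ∑ i ∈ range (w.length + 1), d i = 2 * extPeakNum w + 1 := by
    simp only [d, sum_add_distrib, sum_peaksBeside, sum_ite_eq', mem_range, Nat.lt_succ_self,
      if_true]
  rw [sum_congr rfl fun i hi => congrArg f (hd i hi).1,
    sum_comp_of_le_one (fun i hi => (hd i hi).2) (fun j => f (extPeakNum w + 1 - j)), hsum,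
    card_range]
  congr 2
  omega

end ExtPeaks

section PermWords

/-- The range is reversed so that `permutations'` inserts the largest letter last. -/
def permWords (n : ℕ) : List (List ℕ) := (List.range n).reverse.permutations'

lemma permWords_succ (n : ℕ) :
    permWords (n + 1) = (permWords n).flatMap (List.permutations'Aux n) := by
  rw [permWords, List.range_succ, List.reverse_append]
  rfl

lemma mem_permWords {n : ℕ} {w : List ℕ} : w ∈ permWords n ↔ w.Perm (List.range n) := by
  rw [permWords, List.mem_permutations', List.perm_reverse]

lemma nodup_permWords (n : ℕ) : (permWords n).Nodup :=
  (List.permutations_perm_permutations' _).nodup_iff.mp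
    (List.nodup_permutations _ (List.nodup_reverse.mpr List.nodup_range))

lemma length_permWords (n : ℕ) : (permWords n).length = n.factorial := by
  rw [permWords, ← (List.permutations_perm_permutations' _).length_eq, List.length_permutations,
    List.length_reverse, List.length_range]

lemma sum_perm_ofFn_eq_sum_permWords {M : Type*} [AddCommMonoid M] (n : ℕ) (F : List ℕ → M) :
    ∑ π : Equiv.Perm (Fin n), F (List.ofFn fun i => (π i : ℕ)) =
      ((permWords n).map F).sum := by
  let φ : Equiv.Perm (Fin n) ↪ List ℕ :=
    ⟨fun π => List.ofFn fun i => (π i : ℕ), fun π σ h => by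
      ext i; exact congrFun (List.ofFn_inj.mp h) i⟩
  have himage : univ.map φ = (permWords n).toFinset := by
    refine eq_of_subset_of_card_le (fun w hw => ?_) ?_
    · obtain ⟨π, -, rfl⟩ := mem_map.mp hw
      rw [List.mem_toFinset, mem_permWords, ← List.ofFn_val_eq_range]
      exact π.ofFn_comp_perm _
    · rw [List.toFinset_card_of_nodup (nodup_permWords n), length_permWords, card_map, card_univ,
        Fintype.card_perm, Fintype.card_fin]
  rw [← List.sum_toFinset _ (nodup_permWords n), ← himage, sum_map]
  rfl

end PermWords

section Derivation

variable {R : Type*} [CommSemiring R]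

noncomputable def peakMonomial (n k : ℕ) : MvPolynomial (Fin 2) R :=
  X 0 ^ (2 * k + 1) * X 1 ^ (n - 2 * k)

variable {D : Derivation R (MvPolynomial (Fin 2) R) (MvPolynomial (Fin 2) R)}
  (hx : D (X 0) = X 0 * X 1) (hy : D (X 1) = X 0 ^ 2)
include hx hy

lemma derivation_apply_peakMonomial {n k : ℕ} (h : 2 * k ≤ n) :
    D (peakMonomial n k) =
      (2 * k + 1) • peakMonomial (n + 1) k + (n - 2 * k) • peakMonomial (n + 1) (k + 1) := by
  obtain ⟨e, rfl⟩ := Nat.exists_eq_add_of_le h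
  simp only [peakMonomial, Derivation.leibniz, Derivation.leibniz_pow, hx, hy, smul_eq_mul,
    nsmul_eq_mul]
  rcases e with _ | e
  · simp
    ring
  · simp only [show 2 * k + (e + 1) + 1 - 2 * k = e + 2 by omega,
      show 2 * k + (e + 1) - 2 * k = e + 1 by omega,
      show 2 * k + (e + 1) + 1 - 2 * (k + 1) = e by omega, Nat.add_sub_cancel]
    push_cast
    ring

lemma iterate_derivation_X_zero_eq_sum (n : ℕ) :
    D^[n] (X 0) = ((permWords n).map fun w => peakMonomial n (extPeakNum w)).sum := by
  induction n with
  | zero => simp [permWords, extPeakNum, peakMonomial]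
  | succ n ih =>
    rw [Function.iterate_succ_apply', ih, map_list_sum, List.map_map, permWords_succ]
    simp only [List.flatMap, List.map_flatten, List.sum_flatten, List.map_map]
    refine congrArg List.sum (List.map_congr_left fun w hw => ?_)
    have hlen : w.length = n := by simpa using (mem_permWords.mp hw).length_eq
    have hm : ∀ a ∈ w, a < n := fun a ha => List.mem_range.mp ((mem_permWords.mp hw).subset ha)
    have hsum := sum_extPeakNum_insertIdx (fun k => peakMonomial (R := R) (n + 1) k) hm
    rw [hlen] at hsum
    rw [Function.comp_apply, derivation_apply_peakMonomial hx hy (hlen ▸ two_mul_extPeakNum_le),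
      ← hsum]
    simp only [Function.comp_apply, List.permutations'Aux_eq_map_insertIdx, List.map_map, hlen]
    rfl

end Derivation

theorem stmt12_general
    (D : Derivation ℚ (MvPolynomial (Fin 2) ℚ) (MvPolynomial (Fin 2) ℚ))
    (hx : D (X 0) = X 0 * X 1) (hy : D (X 1) = X 0 ^ 2)
    (n : ℕ) :
    (⇑D)^[n] (X 0) =
      ∑ k ∈ Finset.range (n / 2 + 1),
        (extPeakCount n k : MvPolynomial (Fin 2) ℚ) * X 0 ^ (2 * k + 1) * X 1 ^ (n - 2 * k) := by
  have hbound :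
      ∀ π ∈ (univ : Finset (Equiv.Perm (Fin n))), extPeaks π ∈ range (n / 2 + 1) := by
    intro π _
    have := two_mul_extPeakNum_le (w := List.ofFn fun i => (π i : ℕ))
    rw [List.length_ofFn, ← extPeaksList_eq_extPeakNum] at this
    exact mem_range.mpr (by unfold extPeaks; omega)
  rw [iterate_derivation_X_zero_eq_sum hx hy, ← sum_perm_ofFn_eq_sum_permWords]
  simp_rw [← extPeaksList_eq_extPeakNum]
  change ∑ π, peakMonomial n (extPeaks π) = _
  rw [← sum_fiberwise_of_maps_to' hbound]
  refine sum_congr rfl fun k _ => ?_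
  rw [sum_const, extPeakCount, Nat.card_eq_fintype_card, Fintype.card_subtype, nsmul_eq_mul,
    peakMonomial, mul_assoc]

theorem stmt12
    (D : Derivation ℚ (MvPolynomial (Fin 2) ℚ) (MvPolynomial (Fin 2) ℚ))
    (hx : D (X 0) = X 0 * X 1) (hy : D (X 1) = X 0 ^ 2)
    (n : ℕ) (hn : 1 ≤ n) :
    (⇑D)^[n] (X 0) =
      ∑ k ∈ Finset.range (n / 2 + 1),
        (extPeakCount n k : MvPolynomial (Fin 2) ℚ) * X 0 ^ (2 * k + 1) * X 1 ^ (n - 2 * k) :=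
  stmt12_general D hx hy n
end

section
/- Define T_n(x) = Σ_{k≥0} T(n,k) x^k ∈ ℚ[x] for n ≥ 1, and T_0(x) = 1, where T(n,k) is the number of permutations of [n] with exactly k exterior peaks. Then for every n ≥ 1, T_n(x) = Σ_{j=1}^{n} C(n,j) (-1)^{j-1} (1-x)^{⌊j/2⌋} T_{n-j}(x), where C(n,j) is the binomial coefficient. -/
/-- `T_n(x) = ∑_{k≥0} T(n,k) xᵏ` for `n ≥ 1` and `T_0(x) = 1`.  (All terms with `k > n`
vanish, so the sum over `k ∈ range (n+1)` captures the full sum over `k ≥ 0`.) -/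
noncomputable def Tpoly : ℕ → Polynomial ℚ
  | 0 => 1
  | (n + 1) => ∑ k ∈ Finset.range (n + 2),
      (extPeakCount (n + 1) k : Polynomial ℚ) * Polynomial.X ^ k

/-!
Inserting the new maximum `n` into one of the `n + 1` gaps of a permutation of `[n]` with `k`
exterior peaks keeps `k` for the `2k + 1` gaps next to a peak or at the right end, and raises it
by one elsewhere. Hence `T_{n+1} = T_n + L_n T_n`, where `L_k f = k x f + 2x(1-x) f'` satisfies
the twisted Leibniz rule `L_{j+m} (f g) = (L_j f) g + f (L_m g)`. The polynomials
`D_j = (-1)^j (1-x)^⌊j/2⌋` obey `D_{j+1} = -D_j + L_j D_j`, so by Pascal's rule the binomial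
convolution `S_n = ∑ C(n,j) D_j T_{n-j}` satisfies `S_{n+1} = L_n S_n`. Since `S_0 = 1` and
`L_0 1 = 0`, `S_n = 0` for `n ≥ 1`, which is the claimed recurrence.
-/

open Finset Polynomial

namespace List

/-- Exterior peaks at 0-based positions; the default `0` of `getD` is never read. -/
def peakSet (l : List ℕ) : Finset ℕ :=
  (Finset.range l.length).filter fun i =>
    i + 1 < l.length ∧ l.getD (i + 1) 0 < l.getD i 0 ∧ (i = 0 ∨ l.getD (i - 1) 0 < l.getD i 0)

variable {l w : List ℕ} {i p M : ℕ}

theorem mem_peakSet :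
    i ∈ l.peakSet ↔
      i + 1 < l.length ∧ l.getD (i + 1) 0 < l.getD i 0 ∧
        (i = 0 ∨ l.getD (i - 1) 0 < l.getD i 0) := by
  simp only [peakSet, Finset.mem_filter, Finset.mem_range]
  omega

theorem extPeaksList_eq_card_peakSet (l : List ℕ) : extPeaksList l = #l.peakSet := by
  match l with
  | [] => rfl
  | [a] => rfl
  | a :: b :: t =>
    set l := a :: b :: t
    have hZ : l.zip (l.tail.zip l.tail.tail) =
        (range t.length).map fun i => (l.getD i 0, l.getD (i + 1) 0, l.getD (i + 2) 0) := by
      apply ext_getElem (by simp [l]; omega)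
      intro i h _
      simp only [length_zip, length_tail, l, length_cons] at h
      simp [getElem?_eq_getElem (show i + 2 < l.length by simp [l]; omega),
        getElem?_eq_getElem (show i + 1 < l.length by simp [l]; omega),
        getElem?_eq_getElem (show i < l.length by simp [l]; omega)]
    rw [extPeaksList, hZ, countP_map, peakSet, ← Nat.count_eq_card_filter_range]
    change Nat.count _ t.length + _ = Nat.count _ (t.length + 1 + 1)
    rw [Nat.count_succ, Nat.count_succ']
    have hcongr : ∀ k < t.length,
        (l.getD k 0 < l.getD (k + 1) 0 ∧ l.getD (k + 2) 0 < l.getD (k + 1) 0 ↔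
          k + 1 + 1 < l.length ∧ l.getD (k + 1 + 1) 0 < l.getD (k + 1) 0 ∧
          (k + 1 = 0 ∨ l.getD (k + 1 - 1) 0 < l.getD (k + 1) 0)) := fun k hk => by
      simp only [l, length_cons, Nat.add_sub_cancel, Nat.add_assoc, Nat.reduceAdd]
      omega
    rw [le_antisymm (Nat.count_mono_left fun k hk => (hcongr k hk).1)
      (Nat.count_mono_left fun k hk => (hcongr k hk).2)]
    simp [l]

theorem card_peakSet_le_length : #l.peakSet ≤ l.length :=
  (card_filter_le _ _).trans (card_range _).le

theorem lt_length_of_mem_peakSet (h : i ∈ l.peakSet) : i + 1 < l.length :=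
  (mem_peakSet.1 h).1

theorem succ_notMem_peakSet (h : i ∈ l.peakSet) : i + 1 ∉ l.peakSet := by
  rw [mem_peakSet] at *
  simp only [Nat.add_sub_cancel]
  omega

theorem length_notMem_peakSet_union :
    l.length ∉ l.peakSet ∪ l.peakSet.map (addRightEmbedding 1) := by
  simp only [Finset.mem_union, Finset.mem_map, addRightEmbedding_apply, not_or, not_exists,
    not_and]
  exact ⟨fun h => by have := lt_length_of_mem_peakSet h; omega,
    fun i hi _ => by have := lt_length_of_mem_peakSet hi; omega⟩

theorem disjoint_peakSet_map_succ :
    _root_.Disjoint l.peakSet (l.peakSet.map (addRightEmbedding 1)) := by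
  simp only [Finset.disjoint_left, Finset.mem_map, addRightEmbedding_apply, not_exists, not_and]
  rintro _ hi i hi' rfl
  exact succ_notMem_peakSet hi' hi

theorem getD_insertIdx (hp : p ≤ w.length) (r : ℕ) :
    (w.insertIdx p M).getD r 0 =
      if r < p then w.getD r 0 else if r = p then M else w.getD (r - 1) 0 := by
  simp only [getD_eq_getElem?_getD, getElem?_insertIdx]
  split_ifs <;> simp_all

theorem mem_peakSet_insertIdx {q : ℕ} (hp : p ≤ w.length) (hM : ∀ x ∈ w, x < M) :
    q ∈ (w.insertIdx p M).peakSet ↔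
      (q ∈ w.peakSet ∧ q + 1 < p) ∨ (q = p ∧ p < w.length) ∨
        (q - 1 ∈ w.peakSet ∧ p + 1 < q) := by
  have hlt : ∀ r < w.length, w.getD r 0 < M := fun r hr =>
    hM _ (by rw [getD_eq_getElem _ _ hr]; exact getElem_mem hr)
  simp only [mem_peakSet, getD_insertIdx hp, length_insertIdx_of_le_length hp]
  rcases lt_trichotomy (q + 1) p with h | rfl | h
  · simp (disch := omega) only [if_pos]
    omega
  · have := hlt q (by omega)
    simp (disch := omega) only [if_pos, if_neg, if_true, Nat.add_sub_cancel]
    omega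
  obtain rfl | rfl | h : q = p ∨ q = p + 1 ∨ p + 1 < q := by omega
  · have := hlt q
    have := hlt (q - 1)
    simp (disch := omega) only [if_neg, if_true, true_and, Nat.add_sub_cancel]
    split_ifs <;> omega
  · have := hlt p
    simp (disch := omega) only [if_neg, if_true, Nat.add_sub_cancel]
    omega
  · simp (disch := omega) only [if_neg, Nat.add_sub_cancel, Nat.sub_add_cancel]
    omega

theorem peakSet_insertIdx (hp : p ≤ w.length) (hM : ∀ x ∈ w, x < M) :
    (w.insertIdx p M).peakSet =
      (w.peakSet.filter (· + 1 < p) ∪ ({p} : Finset ℕ).filter (· < w.length)) ∪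
        (w.peakSet.filter (p < ·)).map (addRightEmbedding 1) := by
  ext q
  simp only [mem_peakSet_insertIdx hp hM, Finset.mem_union, Finset.mem_filter,
    Finset.mem_singleton, Finset.mem_map, addRightEmbedding_apply]
  constructor
  · rintro (h | h | ⟨h, hq⟩)
    · exact Or.inl (Or.inl h)
    · exact Or.inl (Or.inr ⟨h.1, h.1 ▸ h.2⟩)
    · exact Or.inr ⟨q - 1, ⟨h, by omega⟩, by omega⟩
  · rintro ((h | h) | ⟨i, ⟨h, hi⟩, rfl⟩)
    · exact Or.inl h
    · exact Or.inr (Or.inl ⟨h.1, h.1 ▸ h.2⟩)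
    · exact Or.inr (Or.inr ⟨by simpa using h, by omega⟩)

theorem card_filter_peakSet_adjacent :
    #(w.peakSet.filter fun i => i + 1 = p ∨ i = p) =
      if p ∈ w.peakSet ∪ w.peakSet.map (addRightEmbedding 1) then 1 else 0 := by
  split_ifs with h
  · rw [card_eq_one]
    simp only [Finset.mem_union, Finset.mem_map, addRightEmbedding_apply] at h
    rcases h with h | ⟨i, hi, rfl⟩
    · refine ⟨p, ?_⟩
      ext i
      simp only [Finset.mem_filter, Finset.mem_singleton]
      constructor
      · rintro ⟨hi, rfl | rfl⟩
        · exact absurd h (succ_notMem_peakSet hi)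
        · rfl
      · rintro rfl; exact ⟨h, Or.inr rfl⟩
    · refine ⟨i, ?_⟩
      ext j
      simp only [Finset.mem_filter, Finset.mem_singleton]
      constructor
      · rintro ⟨hj, h | h⟩
        · omega
        · exact absurd (h ▸ hj) (succ_notMem_peakSet hi)
      · rintro rfl; exact ⟨hi, Or.inl rfl⟩
  · simp only [Finset.mem_union, Finset.mem_map, addRightEmbedding_apply, not_or, not_exists,
      not_and] at h
    rw [card_eq_zero, filter_eq_empty_iff]
    rintro i hi (rfl | rfl)
    · exact h.2 i hi rfl
    · exact h.1 hi

def stableGaps (w : List ℕ) : Finset ℕ :=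
  insert w.length (w.peakSet ∪ w.peakSet.map (addRightEmbedding 1))

theorem card_stableGaps : #w.stableGaps = 2 * #w.peakSet + 1 := by
  rw [stableGaps, Finset.card_insert_of_notMem length_notMem_peakSet_union,
    Finset.card_union_of_disjoint disjoint_peakSet_map_succ, Finset.card_map]
  ring

theorem stableGaps_subset_range : w.stableGaps ⊆ Finset.range (w.length + 1) := by
  intro i hi
  simp only [stableGaps, Finset.mem_insert, Finset.mem_union, Finset.mem_map,
    addRightEmbedding_apply] at hi
  rw [Finset.mem_range]
  rcases hi with rfl | h | ⟨j, hj, rfl⟩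
  · omega
  · have := lt_length_of_mem_peakSet h; omega
  · have := lt_length_of_mem_peakSet hj; omega

theorem card_peakSet_insertIdx (hp : p ≤ w.length) (hM : ∀ x ∈ w, x < M) :
    #(w.insertIdx p M).peakSet = if p ∈ w.stableGaps then #w.peakSet else #w.peakSet + 1 := by
  have hsplit : #w.peakSet = #(w.peakSet.filter (· + 1 < p)) + #(w.peakSet.filter (p < ·)) +
      #(w.peakSet.filter fun i => i + 1 = p ∨ i = p) := by
    simp only [Finset.card_filter]
    rw [Finset.card_eq_sum_ones, ← Finset.sum_add_distrib, ← Finset.sum_add_distrib]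
    exact Finset.sum_congr rfl fun i _ => by split_ifs <;> omega
  have hdisj₁ : _root_.Disjoint (w.peakSet.filter (· + 1 < p))
      (({p} : Finset ℕ).filter (· < w.length)) := by
    simp only [Finset.disjoint_left, Finset.mem_filter, Finset.mem_singleton]
    omega
  have hdisj₂ : _root_.Disjoint
      (w.peakSet.filter (· + 1 < p) ∪ ({p} : Finset ℕ).filter (· < w.length))
      ((w.peakSet.filter (p < ·)).map (addRightEmbedding 1)) := by
    simp only [Finset.disjoint_left, Finset.mem_union, Finset.mem_filter, Finset.mem_singleton,
      Finset.mem_map, addRightEmbedding_apply]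
    omega
  rw [peakSet_insertIdx hp hM, card_union_of_disjoint hdisj₂, card_union_of_disjoint hdisj₁,
    card_map, Finset.filter_singleton]
  rw [card_filter_peakSet_adjacent] at hsplit
  rcases hp.lt_or_eq with hpL | rfl
  · simp only [stableGaps, Finset.mem_insert, hpL.ne, false_or, if_pos hpL, Finset.card_singleton]
    split_ifs at hsplit ⊢ <;> omega
  · simp only [stableGaps, Finset.mem_insert_self, if_true, lt_irrefl, if_false,
      Finset.card_empty, if_neg length_notMem_peakSet_union] at hsplit ⊢
    omega

theorem permutations'Aux_eq_ofFn (x : ℕ) (s : List ℕ) :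
    s.permutations'Aux x = List.ofFn fun k : Fin (s.length + 1) => s.insertIdx k x := by
  apply List.ext_getElem (by simp)
  intro k h _
  rw [List.getElem_permutations'Aux, List.getElem_ofFn]

end List

def binomConv {A : Type*} [Semiring A] (a b : ℕ → A) (n : ℕ) : A :=
  ∑ i ∈ range (n + 1), n.choose i • (a i * b (n - i))

namespace Polynomial

variable {R : Type*} [CommRing R]

noncomputable def peakOp (k : ℕ) : R[X] →ₗ[R] R[X] :=
  LinearMap.mulLeft R ((k : R[X]) * X) + LinearMap.mulLeft R (2 * X * (1 - X)) ∘ₗ derivative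

theorem peakOp_apply (k : ℕ) (f : R[X]) :
    peakOp k f = (k : R[X]) * X * f + 2 * X * (1 - X) * derivative f :=
  rfl

theorem peakOp_mul (j m : ℕ) (f g : R[X]) :
    peakOp (j + m) (f * g) = peakOp j f * g + f * peakOp m g := by
  simp only [peakOp_apply, derivative_mul]
  push_cast
  ring

theorem peakOp_X_pow (k m : ℕ) :
    peakOp k (X ^ m : R[X]) =
      (k : R[X]) * X ^ (m + 1) + 2 * (m : R[X]) * (X ^ m - X ^ (m + 1)) := by
  rw [peakOp_apply, derivative_X_pow]
  cases m with
  | zero => simp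
  | succ m => simp only [map_natCast, Nat.add_sub_cancel]; push_cast; ring

theorem one_sub_X_mul_derivative_pow (k : ℕ) :
    (1 - X) * derivative ((1 - X : R[X]) ^ k) = -((k : R[X]) * (1 - X) ^ k) := by
  cases k with
  | zero => simp
  | succ k => rw [derivative_pow, Nat.add_sub_cancel, map_natCast]; simp; ring

theorem binomConv_succ {a b : ℕ → R[X]} (ha : ∀ j, a (j + 1) = -a j + peakOp j (a j))
    (hb : ∀ m, b (m + 1) = b m + peakOp m (b m)) (n : ℕ) :
    binomConv a b (n + 1) = peakOp n (binomConv a b n) := by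
  calc binomConv a b (n + 1)
      = ∑ i ∈ range (n + 1), n.choose i • (a i * b (n + 1 - i)) +
          ∑ i ∈ range (n + 1), n.choose i • (a (i + 1) * b (n - i)) :=
        sum_choose_succ_nsmul (fun i j => a i * b j) n
    _ = peakOp n (binomConv a b n) := ?_
  rw [← sum_add_distrib, binomConv, map_sum]
  refine sum_congr rfl fun i hi => ?_
  obtain ⟨m, rfl⟩ := Nat.exists_eq_add_of_le (Nat.lt_succ_iff.1 (mem_range.1 hi))
  rw [map_nsmul, ← smul_add, show i + m + 1 - i = m + 1 by omega, Nat.add_sub_cancel_left,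
    ha, hb, peakOp_mul]
  ring

theorem binomConv_eq_zero {a b : ℕ → R[X]} (ha : ∀ j, a (j + 1) = -a j + peakOp j (a j))
    (hb : ∀ m, b (m + 1) = b m + peakOp m (b m)) (h₀ : a 0 * b 0 = 1) {n : ℕ} (hn : 1 ≤ n) :
    binomConv a b n = 0 := by
  induction n, hn using Nat.le_induction with
  | base =>
    rw [show 1 = 0 + 1 from rfl, binomConv_succ ha hb]
    simp [binomConv, h₀, peakOp_apply]
  | succ n _ ih => rw [binomConv_succ ha hb, ih, map_zero]

end Polynomial

section

variable {R : Type*} [CommRing R]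

/-- The exponential generating function of `Tinv` is the reciprocal of that of `Tpoly`. -/
noncomputable def Tinv (j : ℕ) : R[X] := (-1) ^ j * (1 - X) ^ (j / 2)

@[simp]
theorem Tinv_zero : Tinv 0 = (1 : R[X]) := by simp [Tinv]

theorem Tinv_two_mul (a : ℕ) : Tinv (2 * a) = (1 - X : R[X]) ^ a := by
  rw [Tinv, (even_two_mul a).neg_one_pow, Nat.mul_div_cancel_left a two_pos, one_mul]

theorem Tinv_two_mul_add_one (a : ℕ) : Tinv (2 * a + 1) = -(1 - X : R[X]) ^ a := by
  rw [Tinv, (even_two_mul a).add_one.neg_one_pow, show (2 * a + 1) / 2 = a by omega, neg_one_mul]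

theorem Tinv_succ (j : ℕ) : Tinv (j + 1) = -Tinv j + peakOp j (Tinv j : R[X]) := by
  obtain ⟨a, rfl | rfl⟩ := Nat.even_or_odd' j
  · rw [Tinv_two_mul_add_one, Tinv_two_mul, peakOp_apply]
    push_cast
    linear_combination (-2 * X) * one_sub_X_mul_derivative_pow (R := R) a
  · rw [show 2 * a + 1 + 1 = 2 * (a + 1) by ring, Tinv_two_mul, Tinv_two_mul_add_one, peakOp_apply,
      derivative_neg]
    push_cast
    linear_combination (2 * X) * one_sub_X_mul_derivative_pow (R := R) a

end

theorem List.sum_map_permutations'Aux_X_pow_extPeaksList {R : Type*} [CommRing R] {w : List ℕ}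
    {M : ℕ} (hM : ∀ x ∈ w, x < M) :
    ((w.permutations'Aux M).map fun z => (X : R[X]) ^ extPeaksList z).sum =
      X ^ extPeaksList w + peakOp w.length (X ^ extPeaksList w) := by
  have hterm : ∀ p ∈ range (w.length + 1),
      (X : R[X]) ^ #(w.insertIdx p M).peakSet = X ^ (#w.peakSet + 1) +
        if p ∈ w.stableGaps then X ^ #w.peakSet - X ^ (#w.peakSet + 1) else 0 := by
    intro p hp
    rw [card_peakSet_insertIdx (Nat.lt_succ_iff.1 (mem_range.1 hp)) hM]
    split_ifs <;> ring
  simp only [List.permutations'Aux_eq_ofFn, List.map_ofFn, List.sum_ofFn, Function.comp_def,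
    List.extPeaksList_eq_card_peakSet]
  rw [Fin.sum_univ_eq_sum_range (fun p => (X : R[X]) ^ #(w.insertIdx p M).peakSet),
    sum_congr rfl hterm, sum_add_distrib, sum_const, card_range, sum_ite_mem,
    inter_eq_right.2 List.stableGaps_subset_range, sum_const, List.card_stableGaps, peakOp_X_pow]
  simp only [nsmul_eq_mul]
  push_cast
  ring

namespace Equiv.Perm

variable {n : ℕ}

def oneLine (π : Perm (Fin n)) : List ℕ := List.ofFn fun i => (π i : ℕ)

theorem extPeaks_eq (π : Perm (Fin n)) : extPeaks π = extPeaksList π.oneLine := rfl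

@[simp]
theorem length_oneLine (π : Perm (Fin n)) : π.oneLine.length = n := List.length_ofFn

theorem extPeaks_le (π : Perm (Fin n)) : extPeaks π ≤ n := by
  rw [extPeaks_eq, List.extPeaksList_eq_card_peakSet]
  exact List.card_peakSet_le_length.trans_eq π.length_oneLine

theorem oneLine_injective : Function.Injective (@oneLine n) := fun π σ h => by
  ext i
  exact congrFun (List.ofFn_injective h) i

theorem oneLine_perm_range (π : Perm (Fin n)) : π.oneLine.Perm (List.range n) := by
  have := π.ofFn_comp_perm Fin.val
  rwa [List.ofFn_eq_map (f := Fin.val), List.map_coe_finRange_eq_range] at this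

theorem sum_oneLine_eq_sum_permutations' {M : Type*} [AddCommMonoid M] (f : List ℕ → M)
    {l : List ℕ} (hl : l.Perm (List.range n)) :
    ∑ π : Perm (Fin n), f π.oneLine = (l.permutations'.map f).sum := by
  have hnodup : l.permutations'.Nodup :=
    (List.permutations_perm_permutations' l).nodup_iff.1
      (List.nodup_permutations l (hl.nodup_iff.2 List.nodup_range))
  have himage : (univ : Finset (Perm (Fin n))).image oneLine = l.permutations'.toFinset := by
    refine eq_of_subset_of_card_le (fun w hw => ?_) ?_
    · obtain ⟨π, -, rfl⟩ := mem_image.1 hw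
      exact List.mem_toFinset.2 (List.mem_permutations'.2 (π.oneLine_perm_range.trans hl.symm))
    · rw [List.toFinset_card_of_nodup hnodup, card_image_of_injective _ oneLine_injective,
        ← (List.permutations_perm_permutations' l).length_eq, List.length_permutations,
        hl.length_eq, List.length_range, card_univ, Fintype.card_perm, Fintype.card_fin]
  rw [← sum_image fun π _ σ _ h => oneLine_injective h, himage, List.sum_toFinset _ hnodup]

end Equiv.Perm

theorem Tpoly_eq_sum (n : ℕ) :
    Tpoly n = ∑ π : Equiv.Perm (Fin n), (X : ℚ[X]) ^ extPeaks π := by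
  cases n with
  | zero => simp [Tpoly, extPeaks, extPeaksList]
  | succ n =>
    have hmaps : ∀ π ∈ (univ : Finset (Equiv.Perm (Fin (n + 1)))),
        extPeaks π ∈ range (n + 2) := fun π _ => mem_range.2 (by have := π.extPeaks_le; omega)
    rw [Tpoly, ← sum_fiberwise_of_maps_to hmaps]
    refine sum_congr rfl fun k _ => ?_
    rw [sum_congr rfl fun π hπ => by rw [(mem_filter.1 hπ).2], sum_const, nsmul_eq_mul,
      extPeakCount, Nat.card_eq_fintype_card, Fintype.card_subtype]

theorem Tpoly_succ (n : ℕ) : Tpoly (n + 1) = Tpoly n + peakOp n (Tpoly n) := by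
  have hperm : (n :: List.range n).Perm (List.range (n + 1)) := by
    rw [List.range_succ]
    exact (List.perm_append_singleton n _).symm
  rw [Tpoly_eq_sum, Tpoly_eq_sum, map_sum, ← sum_add_distrib]
  simp only [Equiv.Perm.extPeaks_eq]
  rw [Equiv.Perm.sum_oneLine_eq_sum_permutations' (fun w => (X : ℚ[X]) ^ extPeaksList w) hperm,
    Equiv.Perm.sum_oneLine_eq_sum_permutations'
      (fun w => (X : ℚ[X]) ^ extPeaksList w + peakOp n (X ^ extPeaksList w)) List.Perm.rfl,
    List.permutations', List.map_flatMap, List.flatMap_def, List.sum_flatten, List.map_map]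
  refine congrArg List.sum (List.map_congr_left fun w hw => ?_)
  replace hw := List.mem_permutations'.1 hw
  rw [Function.comp_apply, List.sum_map_permutations'Aux_X_pow_extPeaksList
    fun x hx => List.mem_range.1 (hw.subset hx), hw.length_eq, List.length_range]

theorem stmt13 (n : ℕ) (hn : 1 ≤ n) :
    Tpoly n =
      ∑ j ∈ Finset.Icc 1 n,
        (n.choose j : Polynomial ℚ) * (-1) ^ (j - 1) * (1 - Polynomial.X) ^ (j / 2) *
          Tpoly (n - j) := by
  have hS : binomConv Tinv Tpoly n = 0 :=
    binomConv_eq_zero Tinv_succ Tpoly_succ (by simp [Tpoly]) hn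
  rw [binomConv, range_eq_Ico, sum_eq_sum_Ico_succ_bot (Nat.succ_pos n), Nat.succ_eq_add_one,
    zero_add, Ico_add_one_right_eq_Icc] at hS
  rw [Nat.choose_zero_right, one_smul, Nat.sub_zero, Tinv_zero, one_mul] at hS
  rw [eq_neg_of_add_eq_zero_left hS, ← sum_neg_distrib]
  refine sum_congr rfl fun j hj => ?_
  obtain ⟨i, rfl⟩ := Nat.exists_eq_add_of_le' (mem_Icc.1 hj).1
  rw [Tinv, nsmul_eq_mul, Nat.add_sub_cancel, pow_succ]
  ring
end

section
/- Let D be the unique ℚ-linear derivation of the polynomial ring ℚ[x_0, x_1, x_2, …] (in countably many variables) satisfying D(x_i) = x_0 x_{i+1} for every i ≥ 0. Then for every n ≥ 0, D^n(x_0) = Σ_T Π_{v=0}^{n} x_{deg_T(v)}, where the sum runs over all increasing trees T on [n] and deg_T(v) is the degree (number of children) of the vertex v in T; equivalently, D^n(x_0) = Σ_T x_0^{m_0(T)} x_1^{m_1(T)} x_2^{m_2(T)} ⋯, where m_i(T) is the number of vertices of T of degree i. -/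
/-!
The derivation acts on the monomial `∏ v, x_{deg v}` of a tree by picking a vertex `v` and
replacing `x_{deg v}` with `x_0 x_{deg v + 1}`: this is exactly the monomial of the tree obtained
by attaching a new leaf `n + 1` to `v`. Every increasing tree on `[n + 1]` arises in exactly one
way like this, by deleting its largest vertex, which is a leaf. Induction on `n` concludes.
-/

open MvPolynomial

instance {n : ℕ} : DecidablePred (fun p : Fin n → Fin (n + 1) => IsIncreasingTree p) :=
  fun p => inferInstanceAs (Decidable (∀ i : Fin n, (p i : ℕ) ≤ (i : ℕ)))

namespace Derivation

variable {R A M : Type*} [CommSemiring R] [CommSemiring A] [AddCommMonoid M] [Algebra R A]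
  [Module A M] [Module R M] (D : Derivation R A M)

theorem leibniz_prod {ι : Type*} [DecidableEq ι] (s : Finset ι) (f : ι → A) :
    D (∏ i ∈ s, f i) = ∑ i ∈ s, (∏ j ∈ s.erase i, f j) • D (f i) := by
  induction s using Finset.induction with
  | empty => simp
  | insert a s ha ih =>
    rw [Finset.prod_insert ha, leibniz, ih, Finset.sum_insert ha, Finset.erase_insert ha,
      Finset.smul_sum, add_comm]
    congr 1
    refine Finset.sum_congr rfl fun i hi => ?_
    rw [Finset.erase_insert_of_ne (ne_of_mem_of_not_mem hi ha).symm,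
      Finset.prod_insert fun h => ha (Finset.mem_of_mem_erase h), mul_smul]

end Derivation

def addLeaf {n : ℕ} (p : Fin n → Fin (n + 1)) (v : Fin (n + 1)) : Fin (n + 1) → Fin (n + 2) :=
  Fin.snoc (fun j => (p j).castSucc) v.castSucc

section addLeaf

variable {n : ℕ} (p : Fin n → Fin (n + 1)) (v : Fin (n + 1))

@[simp]
theorem addLeaf_castSucc (j : Fin n) : addLeaf p v j.castSucc = (p j).castSucc :=
  Fin.snoc_castSucc ..

@[simp]
theorem addLeaf_last : addLeaf p v (Fin.last n) = v.castSucc :=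
  Fin.snoc_last ..

theorem deg_addLeaf_last : deg (addLeaf p v) (Fin.last (n + 1)) = 0 := by
  simp [deg, Finset.filter_eq_empty_iff, Fin.forall_fin_succ', Fin.castSucc_ne_last]

theorem deg_addLeaf_castSucc (u : Fin (n + 1)) :
    deg (addLeaf p v) u.castSucc = Function.update (deg p) v (deg p v + 1) u := by
  simp only [deg, Finset.card_filter, Fin.sum_univ_castSucc, addLeaf_castSucc, addLeaf_last,
    Fin.castSucc_inj]
  rcases eq_or_ne u v with rfl | huv
  · rw [Function.update_self, if_pos rfl]
  · rw [Function.update_of_ne huv, if_neg huv.symm, add_zero, deg, Finset.card_filter]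

theorem IsIncreasingTree.addLeaf {p : Fin n → Fin (n + 1)} (hp : IsIncreasingTree p) :
    IsIncreasingTree (addLeaf p v) := by
  intro i
  induction i using Fin.lastCases with
  | last => simpa using v.is_le
  | cast j => simpa using hp j

theorem IsIncreasingTree.ne_last {p : Fin n → Fin (n + 1)} (hp : IsIncreasingTree p) (i : Fin n) :
    p i ≠ Fin.last n :=
  Fin.ne_of_lt (Fin.lt_def.2 ((hp i).trans_lt i.is_lt))

end addLeaf

abbrev increasingTrees (n : ℕ) : Finset (Fin n → Fin (n + 1)) :=
  Finset.univ.filter fun p => IsIncreasingTree p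

@[simp]
theorem mem_increasingTrees {n : ℕ} {p : Fin n → Fin (n + 1)} :
    p ∈ increasingTrees n ↔ IsIncreasingTree p := by
  simp [increasingTrees]

theorem sum_increasingTrees_succ {M : Type*} [AddCommMonoid M] {n : ℕ}
    (f : (Fin (n + 1) → Fin (n + 2)) → M) :
    ∑ q ∈ increasingTrees (n + 1), f q =
      ∑ p ∈ increasingTrees n, ∑ v, f (addLeaf p v) := by
  rw [← Finset.sum_product']
  symm
  refine Finset.sum_bij' (fun pv _ => addLeaf pv.1 pv.2)
    (fun q hq => (fun j => (q j.castSucc).castPred ((mem_increasingTrees.1 hq).ne_last _),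
      (q (Fin.last n)).castPred ((mem_increasingTrees.1 hq).ne_last _)))
    (fun pv hpv => ?_) (fun q hq => ?_) (fun pv _ => ?_) (fun q _ => ?_) (fun _ _ => rfl)
  · simp only [Finset.mem_product, mem_increasingTrees] at hpv ⊢
    exact hpv.1.addLeaf pv.2
  · simp only [Finset.mem_product, mem_increasingTrees] at hq ⊢
    exact ⟨fun j => hq j.castSucc, Finset.mem_univ _⟩
  · ext j <;> simp
  · funext i
    induction i using Fin.lastCases <;> simp

theorem derivation_prod_X_deg_eq_sum_addLeaf {R : Type*} [CommSemiring R]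
    (D : Derivation R (MvPolynomial ℕ R) (MvPolynomial ℕ R))
    (h : ∀ i : ℕ, D (X i) = X 0 * X (i + 1)) {n : ℕ} (p : Fin n → Fin (n + 1)) :
    D (∏ v, X (deg p v)) = ∑ v, ∏ w, X (deg (addLeaf p v) w) := by
  rw [D.leibniz_prod]
  refine Finset.sum_congr rfl fun v _ => ?_
  have hunchanged : ∀ u ∈ Finset.univ.erase v,
      (X (deg (addLeaf p v) u.castSucc) : MvPolynomial ℕ R) = X (deg p u) := fun u hu => by
    rw [deg_addLeaf_castSucc, Function.update_of_ne (Finset.ne_of_mem_erase hu)]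
  rw [Fin.prod_univ_castSucc, deg_addLeaf_last, smul_eq_mul, h,
    ← Finset.mul_prod_erase _ _ (Finset.mem_univ v), deg_addLeaf_castSucc, Function.update_self,
    Finset.prod_congr rfl hunchanged]
  ring

theorem stmt17
    (D : Derivation ℚ (MvPolynomial ℕ ℚ) (MvPolynomial ℕ ℚ))
    (h : ∀ i : ℕ, D (X i) = X 0 * X (i + 1)) (n : ℕ) :
    (⇑D)^[n] (X 0) =
      ∑ p ∈ Finset.univ.filter (fun p : Fin n → Fin (n + 1) => IsIncreasingTree p),
        ∏ v : Fin (n + 1), X (deg p v) := by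
  induction n with
  | zero => simp [deg, IsIncreasingTree]
  | succ n ih =>
    rw [Function.iterate_succ_apply', ih, map_sum, sum_increasingTrees_succ]
    exact Finset.sum_congr rfl fun p _ => derivation_prod_X_deg_eq_sum_addLeaf D h p
end
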